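/- arXiv:2306.16838 — 6 statements merged into one kernel-verified Lean document; each statement's English description precedes it below -/
import Mathlib

section
/- For all real x ≥ 0, (1/(1+x) − e^{−x})² ≤ 0.0415. -/
set_option maxHeartbeats 1000000

lemma exp_lb_aux (t : ℝ) (ht : |t| ≤ 1) :
    1 - t + t^2/2 - t^3/6 + t^4/24 - t^5/120 - 7*t^6/4320 ≤ Real.exp (-t) := by
  have h := Real.exp_bound (x := -t) (by rwa [abs_neg]) (n := 6) (by norm_num)
  have hs : ∑ m ∈ Finset.range 6, (-t) ^ m / (m.factorial : ℝ)
      = 1 - t + t^2/2 - t^3/6 + t^4/24 - t^5/120 := by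
    simp [Finset.sum_range_succ, Nat.factorial]
    ring
  rw [hs] at h
  have h6 : |(-t)| ^ 6 = t ^ 6 := by rw [abs_neg]; rw [← abs_pow]; exact abs_of_nonneg (by positivity)
  rw [h6] at h
  have := abs_le.1 h
  norm_num [Nat.factorial] at this ⊢
  linarith [this.1]

lemma exp_neg_two_lb : (0.135335 : ℝ) ≤ Real.exp (-2) := by
  have h1 : Real.exp 1 < 2.7182818286 := Real.exp_one_lt_d9
  have hp : (0 : ℝ) < Real.exp 1 := Real.exp_pos 1
  have h2 : Real.exp (-2) = (Real.exp 1 * Real.exp 1)⁻¹ := by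
    rw [← Real.exp_add, ← Real.exp_neg]; norm_num
  rw [h2, le_inv_comm₀ (by norm_num) (by positivity)]
  nlinarith

lemma exp_neg_three_lb : (0.049787 : ℝ) ≤ Real.exp (-3) := by
  have h1 : Real.exp 1 < 2.7182818286 := Real.exp_one_lt_d9
  have hp : (0 : ℝ) < Real.exp 1 := Real.exp_pos 1
  have h2 : Real.exp (-3) = (Real.exp 1 * Real.exp 1 * Real.exp 1)⁻¹ := by
    rw [← Real.exp_add, ← Real.exp_add, ← Real.exp_neg]; norm_num
  rw [h2, le_inv_comm₀ (by norm_num) (by positivity)]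
  nlinarith

/-- For all real `x ≥ 0`, `(1/(1+x) − e^{−x})² ≤ 0.0415`. -/
theorem shrinkage_factor_difference_bound (x : ℝ) (hx : 0 ≤ x) :
    (1 / (1 + x) - Real.exp (-x)) ^ 2 ≤ 0.0415 := by
  have h1x : (0:ℝ) < 1 + x := by linarith
  have hqe : 0 < Real.exp (-x) := Real.exp_pos _
  have hql : 0 ≤ 1 / (1 + x) - Real.exp (-x) := by
    have h := Real.add_one_le_exp x
    have h2 : Real.exp (-x) ≤ 1 / (1 + x) := by
      rw [Real.exp_neg, one_div]
      exact inv_anti₀ h1x (by linarith)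
    linarith
  rcases le_or_gt x 1 with hc1 | hc1
  · -- x ∈ [0, 1]
    have hb := exp_lb_aux x (by rw [abs_of_nonneg hx]; linarith)
    have key : 1 / (1 + x) ≤ 0.20371 + Real.exp (-x) := by
      rw [div_le_iff₀ h1x]
      have hb2 := mul_le_mul_of_nonneg_right hb h1x.le
      nlinarith [hb2, sq_nonneg x, sq_nonneg (x - 1), mul_nonneg hx (sq_nonneg x),
        mul_nonneg (mul_nonneg hx (sub_nonneg.2 hc1)) (sq_nonneg x),
        mul_nonneg (mul_nonneg hx (sub_nonneg.2 hc1)) (sq_nonneg (x*x))]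
    nlinarith [key, hql]
  rcases le_or_gt x 3 with hc3 | hc3
  · -- x ∈ [1, 3]
    have hb := exp_lb_aux (x - 2) (abs_le.2 ⟨by linarith, by linarith⟩)
    have hsplit : Real.exp (-x) = Real.exp (-2) * Real.exp (-(x - 2)) := by
      rw [← Real.exp_add]; ring_nf
    have hP : (0:ℝ) ≤ 1 - (x-2) + (x-2)^2/2 - (x-2)^3/6 + (x-2)^4/24 - (x-2)^5/120 - 7*(x-2)^6/4320 := by
      nlinarith [sq_nonneg (x-2), sq_nonneg ((x-2)^2), sq_nonneg ((x-2)^3),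
        mul_nonneg (mul_nonneg (sub_nonneg.2 hc1.le) (sub_nonneg.2 hc3)) (sq_nonneg (x-2)),
        sub_nonneg.2 hc1.le, sub_nonneg.2 hc3]
    have hE : 0.135335 * (1 - (x-2) + (x-2)^2/2 - (x-2)^3/6 + (x-2)^4/24 - (x-2)^5/120 - 7*(x-2)^6/4320)
        ≤ Real.exp (-x) := by
      rw [hsplit]
      exact mul_le_mul exp_neg_two_lb hb hP (Real.exp_pos _).le
    have key : 1 / (1 + x) ≤ 0.20371 + Real.exp (-x) := by
      rw [div_le_iff₀ h1x]
      have hE2 := mul_le_mul_of_nonneg_right hE h1x.le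
      nlinarith [hE2, mul_nonneg (sub_nonneg.2 hc1.le) (sub_nonneg.2 hc3),
        sq_nonneg (x - 2.513), sq_nonneg ((x - 2.513)^2), sq_nonneg ((x-2.513)^3),
        mul_nonneg (mul_nonneg (sub_nonneg.2 hc1.le) (sub_nonneg.2 hc3)) (sq_nonneg (x - 2.513)),
        mul_nonneg (mul_nonneg (sub_nonneg.2 hc1.le) (sub_nonneg.2 hc3)) (sq_nonneg ((x - 2.513)^2))]
    nlinarith [key, hql]
  rcases le_or_gt x 3.92 with hc4 | hc4
  · -- x ∈ [3, 3.92]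
    have hb := exp_lb_aux (x - 3) (abs_le.2 ⟨by linarith, by linarith⟩)
    have hsplit : Real.exp (-x) = Real.exp (-3) * Real.exp (-(x - 3)) := by
      rw [← Real.exp_add]; ring_nf
    have hP : (0:ℝ) ≤ 1 - (x-3) + (x-3)^2/2 - (x-3)^3/6 + (x-3)^4/24 - (x-3)^5/120 - 7*(x-3)^6/4320 := by
      nlinarith [sq_nonneg (x-3), sq_nonneg ((x-3)^2), sq_nonneg ((x-3)^3),
        sub_nonneg.2 hc3.le, sub_nonneg.2 hc4]
    have hE : 0.049787 * (1 - (x-3) + (x-3)^2/2 - (x-3)^3/6 + (x-3)^4/24 - (x-3)^5/120 - 7*(x-3)^6/4320)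
        ≤ Real.exp (-x) := by
      rw [hsplit]
      exact mul_le_mul exp_neg_three_lb hb hP (Real.exp_pos _).le
    have key : 1 / (1 + x) ≤ 0.20371 + Real.exp (-x) := by
      rw [div_le_iff₀ h1x]
      have hE2 := mul_le_mul_of_nonneg_right hE h1x.le
      nlinarith [hE2, mul_nonneg (sub_nonneg.2 hc3.le) (sub_nonneg.2 hc4),
        sq_nonneg (x - 3), sq_nonneg ((x - 3)^2),
        mul_nonneg (mul_nonneg (sub_nonneg.2 hc3.le) (sub_nonneg.2 hc4)) (sq_nonneg (x - 3))]
    nlinarith [key, hql]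
  · -- x > 3.92
    have h2 : 1 / (1 + x) ≤ 1 / 4.92 := by
      apply one_div_le_one_div_of_le <;> linarith
    nlinarith [hql, hqe, h2]
end

section
/- For all real x ≥ 0, 1 − e^{−x} ≤ 1.2985 · x/(x+1). -/
private lemma expStep {a b c l r v : ℝ} (hc : c = a + b) (ha : l ≤ Real.exp a)
    (hb : r ≤ Real.exp b) (hl0 : 0 ≤ l) (hr0 : 0 ≤ r) (hv : v ≤ l * r) :
    v ≤ Real.exp c := by
  rw [hc, Real.exp_add]
  calc v ≤ l * r := hv
    _ ≤ Real.exp a * Real.exp b :=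
      mul_le_mul ha hb hr0 (Real.exp_pos a).le

private lemma key (m l a b x : ℝ) (hl : l ≤ Real.exp (-m)) (hl0 : 0 ≤ l)
    (hba : a < b) (hx0 : 0 ≤ x) (hxa : a ≤ x) (hxb : x ≤ b) (hb1 : b ≤ 1 + m)
    (h1 : 0 ≤ 1.2985*a - (a+1) + l*((1+m-a)*(a+1)))
    (h2 : 0 ≤ 1.2985*b - (b+1) + l*((1+m-b)*(b+1))) :
    1 - Real.exp (-x) ≤ 1.2985 * (x / (x + 1)) := by
  have hx1 : (0:ℝ) < x + 1 := by linarith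
  have htan : Real.exp (-m) * (1 + m - x) ≤ Real.exp (-x) := by
    have h := Real.add_one_le_exp (m - x)
    have h2 := mul_le_mul_of_nonneg_left h (Real.exp_pos (-m)).le
    rw [← Real.exp_add] at h2
    rw [show -m + (m - x) = -x by ring] at h2
    nlinarith [h2]
  have hxm : 0 ≤ 1 + m - x := by linarith
  have hlx : l * (1 + m - x) ≤ Real.exp (-x) :=
    le_trans (mul_le_mul_of_nonneg_right hl hxm) htan
  have hab : 0 ≤ b - a := by linarith
  have hba' : (0:ℝ) < b - a := by linarith
  have hid : (b-a) * (1.2985*x - (x+1) + l*((1+m-x)*(x+1)))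
      = (b-x) * (1.2985*a - (a+1) + l*((1+m-a)*(a+1)))
      + (x-a) * (1.2985*b - (b+1) + l*((1+m-b)*(b+1)))
      + l*((x-a)*((b-x)*(b-a))) := by ring
  have h5 : 0 ≤ (b-a) * (1.2985*x - (x+1) + l*((1+m-x)*(x+1))) := by
    rw [hid]
    have t1 : (0:ℝ) ≤ b - x := by linarith
    have t2 : (0:ℝ) ≤ x - a := by linarith
    exact add_nonneg (add_nonneg (mul_nonneg t1 h1) (mul_nonneg t2 h2))
      (mul_nonneg hl0 (mul_nonneg t2 (mul_nonneg t1 hab)))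
  have key2 : 0 ≤ 1.2985*x - (x+1) + l*((1+m-x)*(x+1)) :=
    (mul_nonneg_iff_of_pos_left hba').mp h5
  have h3 : (1 - Real.exp (-x)) * (x+1) ≤ 1.2985 * x := by
    nlinarith [mul_le_mul_of_nonneg_right hlx hx1.le]
  calc 1 - Real.exp (-x) = (1 - Real.exp (-x))*(x+1)/(x+1) := by field_simp
    _ ≤ 1.2985*x/(x+1) := (div_le_div_iff_of_pos_right hx1).2 h3
    _ = 1.2985*(x/(x+1)) := mul_div_assoc _ _ _


private lemma rho0 : ((49688474524021/50000000000000) : ℝ) ≤ Real.exp (-(1/160)) := by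
  have h := Real.exp_bound (x := -(1/160)) (abs_le.mpr ⟨by norm_num, by norm_num⟩) (n := 4) (by norm_num)
  rw [show |(-(1/160):ℝ)| = 1/160 by rw [abs_neg]; exact abs_of_nonneg (by norm_num)] at h
  have h1 := (abs_le.1 h).1
  simp only [Finset.sum_range_succ, Finset.sum_range_zero] at h1
  norm_num [Nat.factorial] at h1
  linarith


private lemma rho1 : ((98757780020971/100000000000000) : ℝ) ≤ Real.exp (-(1/80)) :=
  expStep (by norm_num) rho0 rho0 (by norm_num) (by norm_num) (by norm_num)


private lemma rho2 : ((6095686946669/6250000000000) : ℝ) ≤ Real.exp (-(1/40)) :=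
  expStep (by norm_num) rho1 rho1 (by norm_num) (by norm_num) (by norm_num)


private lemma rho3 : ((11890367792573/12500000000000) : ℝ) ≤ Real.exp (-(1/20)) :=
  expStep (by norm_num) rho2 rho2 (by norm_num) (by norm_num) (by norm_num)


private lemma rho4 : ((904837415953/1000000000000) : ℝ) ≤ Real.exp (-(1/10)) :=
  expStep (by norm_num) rho3 rho3 (by norm_num) (by norm_num) (by norm_num)


private lemma rho5 : ((1637461498617/2000000000000) : ℝ) ≤ Real.exp (-(1/5)) :=
  expStep (by norm_num) rho4 rho4 (by norm_num) (by norm_num) (by norm_num)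


private lemma rho6 : ((2681280159453/4000000000000) : ℝ) ≤ Real.exp (-(2/5)) :=
  expStep (by norm_num) rho5 rho5 (by norm_num) (by norm_num) (by norm_num)


private lemma LB1 : ((2681280159453/4000000000000) : ℝ) ≤ Real.exp (-(2/5)) :=
  expStep (by norm_num) (by rw [neg_zero, Real.exp_zero] : (1:ℝ) ≤ Real.exp (-(0:ℝ))) rho6 (by norm_num) (by norm_num) (by norm_num)


private lemma LB2 : ((22466447792113/50000000000000) : ℝ) ≤ Real.exp (-(4/5)) :=
  expStep (by norm_num) LB1 rho6 (by norm_num) (by norm_num) (by norm_num)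


private lemma LB3 : ((40656965131717/100000000000000) : ℝ) ≤ Real.exp (-(9/10)) :=
  expStep (by norm_num) LB2 rho4 (by norm_num) (by norm_num) (by norm_num)


private lemma LB4 : ((332871075269/1000000000000) : ℝ) ≤ Real.exp (-(11/10)) :=
  expStep (by norm_num) LB3 rho5 (by norm_num) (by norm_num) (by norm_num)


private lemma LB5 : ((27253178487811/100000000000000) : ℝ) ≤ Real.exp (-(13/10)) :=
  expStep (by norm_num) LB4 rho5 (by norm_num) (by norm_num) (by norm_num)


private lemma LB6 : ((3240503157367/12500000000000) : ℝ) ≤ Real.exp (-(27/20)) :=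
  expStep (by norm_num) LB5 rho3 (by norm_num) (by norm_num) (by norm_num)


private lemma LB7 : ((4691405605279/20000000000000) : ℝ) ≤ Real.exp (-(29/20)) :=
  expStep (by norm_num) LB6 rho4 (by norm_num) (by norm_num) (by norm_num)


private lemma LB8 : ((1061239831267/5000000000000) : ℝ) ≤ Real.exp (-(31/20)) :=
  expStep (by norm_num) LB7 rho4 (by norm_num) (by norm_num) (by norm_num)


private lemma LB9 : ((96024950663/500000000000) : ℝ) ≤ Real.exp (-(33/20)) :=
  expStep (by norm_num) LB8 rho4 (by norm_num) (by norm_num) (by norm_num)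


private lemma LB10 : ((18730817225951/100000000000000) : ℝ) ≤ Real.exp (-(67/40)) :=
  expStep (by norm_num) LB9 rho2 (by norm_num) (by norm_num) (by norm_num)


private lemma LB11 : ((17817304469761/100000000000000) : ℝ) ≤ Real.exp (-(69/40)) :=
  expStep (by norm_num) LB10 rho3 (by norm_num) (by norm_num) (by norm_num)


private lemma LB12 : ((17595974353913/100000000000000) : ℝ) ≤ Real.exp (-(139/80)) :=
  expStep (by norm_num) LB11 rho1 (by norm_num) (by norm_num) (by norm_num)


private lemma LB13 : ((17161528189291/100000000000000) : ℝ) ≤ Real.exp (-(141/80)) :=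
  expStep (by norm_num) LB12 rho2 (by norm_num) (by norm_num) (by norm_num)


private lemma LB14 : ((2118543032177/12500000000000) : ℝ) ≤ Real.exp (-(71/40)) :=
  expStep (by norm_num) LB13 rho1 (by norm_num) (by norm_num) (by norm_num)


private lemma LB15 : ((16529888137213/100000000000000) : ℝ) ≤ Real.exp (-(9/5)) :=
  expStep (by norm_num) LB14 rho2 (by norm_num) (by norm_num) (by norm_num)


private lemma LB16 : ((3930928990431/25000000000000) : ℝ) ≤ Real.exp (-(37/20)) :=
  expStep (by norm_num) LB15 rho3 (by norm_num) (by norm_num) (by norm_num)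


private lemma LB17 : ((15335496022561/100000000000000) : ℝ) ≤ Real.exp (-(15/8)) :=
  expStep (by norm_num) LB16 rho2 (by norm_num) (by norm_num) (by norm_num)


private lemma LB18 : ((14587575039183/100000000000000) : ℝ) ≤ Real.exp (-(77/40)) :=
  expStep (by norm_num) LB17 rho3 (by norm_num) (by norm_num) (by norm_num)


private lemma LB19 : ((13876130593411/100000000000000) : ℝ) ≤ Real.exp (-(79/40)) :=
  expStep (by norm_num) LB18 rho3 (by norm_num) (by norm_num) (by norm_num)


private lemma LB20 : ((196181908587/1562500000000) : ℝ) ≤ Real.exp (-(83/40)) :=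
  expStep (by norm_num) LB19 rho4 (by norm_num) (by norm_num) (by norm_num)


private lemma LB21 : ((2272162959649/20000000000000) : ℝ) ≤ Real.exp (-(87/40)) :=
  expStep (by norm_num) LB20 rho4 (by norm_num) (by norm_num) (by norm_num)


private lemma LB22 : ((4650724206261/50000000000000) : ℝ) ≤ Real.exp (-(19/8)) :=
  expStep (by norm_num) LB21 rho5 (by norm_num) (by norm_num) (by norm_num)


private lemma LB23 : ((3807690914219/50000000000000) : ℝ) ≤ Real.exp (-(103/40)) :=
  expStep (by norm_num) LB22 rho5 (by norm_num) (by norm_num) (by norm_num)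


private lemma LB24 : ((1276185762703/25000000000000) : ℝ) ≤ Real.exp (-(119/40)) :=
  expStep (by norm_num) LB23 rho6 (by norm_num) (by norm_num) (by norm_num)


/-- For all real `x ≥ 0`, `1 − e^{−x} ≤ 1.2985 · x/(x+1)`. -/
theorem one_sub_exp_le (x : ℝ) (hx : 0 ≤ x) :
    1 - Real.exp (-x) ≤ 1.2985 * (x / (x + 1)) := by
  rcases le_total x ((1/5) : ℝ) with h0 | h0
  · exact key 0 1 0 (1/5) x (by rw [neg_zero, Real.exp_zero]) (by norm_num) (by norm_num) hx hx h0 (by norm_num) (by norm_num) (by norm_num)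
  rcases le_total x ((3/5) : ℝ) with h1 | h1
  · exact key (2/5) (2681280159453/4000000000000) (1/5) (3/5) x LB1 (by norm_num) (by norm_num) hx h0 h1 (by norm_num) (by norm_num) (by norm_num)
  rcases le_total x (1 : ℝ) with h2 | h2
  · exact key (4/5) (22466447792113/50000000000000) (3/5) 1 x LB2 (by norm_num) (by norm_num) hx h1 h2 (by norm_num) (by norm_num) (by norm_num)
  rcases le_total x ((6/5) : ℝ) with h3 | h3
  · exact key (11/10) (332871075269/1000000000000) 1 (6/5) x LB4 (by norm_num) (by norm_num) hx h2 h3 (by norm_num) (by norm_num) (by norm_num)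
  rcases le_total x ((7/5) : ℝ) with h4 | h4
  · exact key (13/10) (27253178487811/100000000000000) (6/5) (7/5) x LB5 (by norm_num) (by norm_num) hx h3 h4 (by norm_num) (by norm_num) (by norm_num)
  rcases le_total x ((3/2) : ℝ) with h5 | h5
  · exact key (29/20) (4691405605279/20000000000000) (7/5) (3/2) x LB7 (by norm_num) (by norm_num) hx h4 h5 (by norm_num) (by norm_num) (by norm_num)
  rcases le_total x ((8/5) : ℝ) with h6 | h6
  · exact key (31/20) (1061239831267/5000000000000) (3/2) (8/5) x LB8 (by norm_num) (by norm_num) hx h5 h6 (by norm_num) (by norm_num) (by norm_num)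
  rcases le_total x ((17/10) : ℝ) with h7 | h7
  · exact key (33/20) (96024950663/500000000000) (8/5) (17/10) x LB9 (by norm_num) (by norm_num) hx h6 h7 (by norm_num) (by norm_num) (by norm_num)
  rcases le_total x ((7/4) : ℝ) with h8 | h8
  · exact key (69/40) (17817304469761/100000000000000) (17/10) (7/4) x LB11 (by norm_num) (by norm_num) hx h7 h8 (by norm_num) (by norm_num) (by norm_num)
  rcases le_total x ((71/40) : ℝ) with h9 | h9
  · exact key (141/80) (17161528189291/100000000000000) (7/4) (71/40) x LB13 (by norm_num) (by norm_num) hx h8 h9 (by norm_num) (by norm_num) (by norm_num)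
  rcases le_total x ((73/40) : ℝ) with h10 | h10
  · exact key (9/5) (16529888137213/100000000000000) (71/40) (73/40) x LB15 (by norm_num) (by norm_num) hx h9 h10 (by norm_num) (by norm_num) (by norm_num)
  rcases le_total x ((15/8) : ℝ) with h11 | h11
  · exact key (37/20) (3930928990431/25000000000000) (73/40) (15/8) x LB16 (by norm_num) (by norm_num) hx h10 h11 (by norm_num) (by norm_num) (by norm_num)
  rcases le_total x ((79/40) : ℝ) with h12 | h12
  · exact key (77/40) (14587575039183/100000000000000) (15/8) (79/40) x LB18 (by norm_num) (by norm_num) hx h11 h12 (by norm_num) (by norm_num) (by norm_num)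
  rcases le_total x ((87/40) : ℝ) with h13 | h13
  · exact key (83/40) (196181908587/1562500000000) (79/40) (87/40) x LB20 (by norm_num) (by norm_num) hx h12 h13 (by norm_num) (by norm_num) (by norm_num)
  rcases le_total x ((103/40) : ℝ) with h14 | h14
  · exact key (19/8) (4650724206261/50000000000000) (87/40) (103/40) x LB22 (by norm_num) (by norm_num) hx h13 h14 (by norm_num) (by norm_num) (by norm_num)
  rcases le_total x ((27/8) : ℝ) with h15 | h15
  · exact key (119/40) (1276185762703/25000000000000) (103/40) (27/8) x LB24 (by norm_num) (by norm_num) hx h14 h15 (by norm_num) (by norm_num) (by norm_num)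
  -- tail: x ≥ (27/8)
  have hx1 : (0:ℝ) < x + 1 := by linarith
  have h3 : (1 - Real.exp (-x)) * (x+1) ≤ 1.2985 * x := by
    nlinarith [mul_pos (Real.exp_pos (-x)) hx1]
  calc 1 - Real.exp (-x) = (1 - Real.exp (-x))*(x+1)/(x+1) := by field_simp
    _ ≤ 1.2985*x/(x+1) := (div_le_div_iff_of_pos_right hx1).2 h3
    _ = 1.2985*(x/(x+1)) := mul_div_assoc _ _ _
end

section
/- Let K be symmetric positive definite with eigendecomposition K = U S Uᵀ, t ≥ 0, y ∈ ℝ^n. Define α_KGF(t) = (I − exp(−tK))K⁻¹y and α_KRR(1/t) = (K + (1/t)I)⁻¹y. Then ‖α_KGF(t) − α_KRR(1/t)‖₂² ≤ 0.0415 · ‖K⁻¹y‖₂². -/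
open Matrix

namespace KGFBound

/-- polynomial upper bound for `exp b` on `[0,4]` -/
noncomputable def UB (b : ℝ) : ℝ :=
  (1 + b/4 + (b/4)^2/2 + (b/4)^3/6 + (b/4)^4/24 + (b/4)^5/120 + (b/4)^6*(7/4320))^4

lemma exp_le_UB {b : ℝ} (h0 : 0 ≤ b) (h4 : b ≤ 4) : Real.exp b ≤ UB b := by
  have h01 : 0 ≤ b/4 := by linarith
  have h14 : b/4 ≤ 1 := by linarith
  have := Real.exp_bound' h01 h14 (n := 6) (by norm_num)
  have hsum : ∑ m ∈ Finset.range 6, (b/4) ^ m / (Nat.factorial m) =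
      1 + b/4 + (b/4)^2/2 + (b/4)^3/6 + (b/4)^4/24 + (b/4)^5/120 := by
    simp [Finset.sum_range_succ, Nat.factorial]
  rw [hsum] at this
  have hb : Real.exp b = (Real.exp (b/4))^4 := by
    rw [← Real.exp_nat_mul]; ring_nf
  rw [hb, UB]
  have h6 : (b/4)^6 * ((6+1) / ((Nat.factorial 6) * 6)) = (b/4)^6*(7/4320) := by
    norm_num [Nat.factorial]
  apply pow_le_pow_left₀ (le_of_lt (Real.exp_pos _))
  calc Real.exp (b/4) ≤ _ := this
    _ = 1 + b/4 + (b/4)^2/2 + (b/4)^3/6 + (b/4)^4/24 + (b/4)^5/120 + (b/4)^6*(7/4320) := by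
        push_cast
        norm_num [Nat.factorial]
        ring

lemma UB_pos {b : ℝ} (h0 : 0 ≤ b) (h4 : b ≤ 4) : 0 < UB b :=
  lt_of_lt_of_le (Real.exp_pos b) (exp_le_UB h0 h4)

lemma inv_UB_le_exp_neg {b : ℝ} (h0 : 0 ≤ b) (h4 : b ≤ 4) : (UB b)⁻¹ ≤ Real.exp (-b) := by
  rw [Real.exp_neg]
  exact inv_anti₀ (Real.exp_pos b) (exp_le_UB h0 h4)

/-- interval step bound for `H x = (1+x)⁻¹ - exp (-x)` -/
lemma H_step {a b x : ℝ} (h0 : 0 ≤ a) (h4 : b ≤ 4) (hax : a ≤ x) (hxb : x ≤ b)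
    (hnum : (1+a)⁻¹ - (UB b)⁻¹ ≤ 0.203715) :
    (1+x)⁻¹ - Real.exp (-x) ≤ 0.203715 := by
  have h1 : (1+x)⁻¹ ≤ (1+a)⁻¹ := by
    apply inv_anti₀ (by linarith) (by linarith)
  have h2 : Real.exp (-b) ≤ Real.exp (-x) := Real.exp_le_exp.2 (by linarith)
  have h3 := inv_UB_le_exp_neg (le_trans h0 (le_trans hax hxb)) h4
  linarith

/-- interval step bound for concavity: `2/(1+x)^3 ≤ exp (-x)` -/
lemma conc_step {a b x : ℝ} (h0 : 0 ≤ a) (h4 : b ≤ 4) (hax : a ≤ x) (hxb : x ≤ b)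
    (hnum : 2*((1+a)^3)⁻¹ ≤ (UB b)⁻¹) :
    2*((1+x)^3)⁻¹ ≤ Real.exp (-x) := by
  have h1 : ((1+x)^3)⁻¹ ≤ ((1+a)^3)⁻¹ := by
    have h5 : (0:ℝ) < 1 + a := by linarith
    apply inv_anti₀ (by positivity)
    exact pow_le_pow_left₀ (by linarith) (by linarith) 3
  have h2 : Real.exp (-b) ≤ Real.exp (-x) := Real.exp_le_exp.2 (by linarith)
  have h3 := inv_UB_le_exp_neg (le_trans h0 (le_trans hax hxb)) h4
  linarith

lemma H_le_A {x : ℝ} (h0 : 0 ≤ x) (h15 : x ≤ 3/2) :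
    (1+x)⁻¹ - Real.exp (-x) ≤ 0.203715 := by
  rcases le_total x (11/50) with h | h
  · exact H_step (a := 0) le_rfl (by norm_num) h0 h (by norm_num [UB])
  rcases le_total x (12/25) with h' | h'
  · exact H_step (a := 11/50) (by norm_num) (by norm_num) h h' (by norm_num [UB])
  rcases le_total x (3/4) with h | h
  · exact H_step (a := 12/25) (by norm_num) (by norm_num) h' h (by norm_num [UB])
  rcases le_total x 1 with h' | h'
  · exact H_step (a := 3/4) (by norm_num) (by norm_num) h h' (by norm_num [UB])
  rcases le_total x (121/100) with h | h
  · exact H_step (a := 1) (by norm_num) (by norm_num) h' h (by norm_num [UB])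
  rcases le_total x (139/100) with h' | h'
  · exact H_step (a := 121/100) (by norm_num) (by norm_num) h h' (by norm_num [UB])
  · exact H_step (a := 139/100) (by norm_num) (by norm_num) h' h15 (by norm_num [UB])

lemma conc_on {x : ℝ} (h1 : 3/2 ≤ x) (h2 : x ≤ 391/100) :
    2*((1+x)^3)⁻¹ ≤ Real.exp (-x) := by
  rcases le_total x (41/20) with h | h
  · exact conc_step (a := 3/2) (by norm_num) (by norm_num) h1 h (by norm_num [UB])
  rcases le_total x (53/20) with h' | h'
  · exact conc_step (a := 41/20) (by norm_num) (by norm_num) h h' (by norm_num [UB])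
  rcases le_total x (319/100) with h | h
  · exact conc_step (a := 53/20) (by norm_num) (by norm_num) h' h (by norm_num [UB])
  rcases le_total x (18/5) with h' | h'
  · exact conc_step (a := 319/100) (by norm_num) (by norm_num) h h' (by norm_num [UB])
  rcases le_total x (97/25) with h | h
  · exact conc_step (a := 18/5) (by norm_num) (by norm_num) h' h (by norm_num [UB])
  · exact conc_step (a := 97/25) (by norm_num) (by norm_num) h h2 (by norm_num [UB])

lemma exp_x0_lo : (0.0810237:ℝ) ≤ Real.exp (-(2.513:ℝ)) := by
  have h := inv_UB_le_exp_neg (b := 2.513) (by norm_num) (by norm_num)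
  have h2 : (0.0810237:ℝ) ≤ (UB 2.513)⁻¹ := by norm_num [UB]
  linarith

lemma exp_x0_hi : Real.exp (-(2.513:ℝ)) ≤ 0.0810259 := by
  have hL := Real.sum_le_exp_of_nonneg (x := 2.513) (by norm_num) 12
  have hsum : (1/0.0810259 : ℝ) ≤ ∑ i ∈ Finset.range 12, (2.513:ℝ)^i / (Nat.factorial i) := by
    simp only [Finset.sum_range_succ, Finset.sum_range_zero, Nat.factorial]
    norm_num
  rw [Real.exp_neg]
  calc (Real.exp 2.513)⁻¹ ≤ ((1/0.0810259:ℝ))⁻¹ := by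
        apply inv_anti₀ (by norm_num) (le_trans hsum hL)
    _ = 0.0810259 := by norm_num
noncomputable def Hf (y : ℝ) : ℝ := (1+y)⁻¹ - Real.exp (-y)
noncomputable def Df (y : ℝ) : ℝ := Real.exp (-y) - ((1+y)^2)⁻¹

lemma hasDerivAt_Hf {x : ℝ} (hx : (0:ℝ) ≤ x) : HasDerivAt Hf (Df x) x := by
  have h1 : HasDerivAt (fun y : ℝ => 1 + y) 1 x := by
    simpa using (hasDerivAt_id x).const_add (1:ℝ)
  have h2 := h1.inv (by linarith : (1:ℝ)+x ≠ 0)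
  have h3 : HasDerivAt (fun y : ℝ => Real.exp (-y)) (-Real.exp (-x)) x := by
    simpa using (hasDerivAt_neg x).exp
  have := h2.sub h3
  refine this.congr_deriv ?_
  unfold Df
  field_simp
  ring

lemma hasDerivAt_Df {x : ℝ} (hx : (0:ℝ) ≤ x) :
    HasDerivAt Df (2*((1+x)^3)⁻¹ - Real.exp (-x)) x := by
  have h1 : HasDerivAt (fun y : ℝ => 1 + y) 1 x := by
    simpa using (hasDerivAt_id x).const_add (1:ℝ)
  have h4 : HasDerivAt (fun y : ℝ => ((1+y))^2) (2*(1+x)) x := by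
    have := h1.pow 2
    refine this.congr_deriv ?_
    push_cast
    ring
  have h5 := h4.inv (by positivity : ((1:ℝ)+x)^2 ≠ 0)
  have h3 : HasDerivAt (fun y : ℝ => Real.exp (-y)) (-Real.exp (-x)) x := by
    simpa using (hasDerivAt_neg x).exp
  have := h3.sub h5
  refine this.congr_deriv ?_
  have hne : (1:ℝ)+x ≠ 0 := by linarith
  field_simp
  ring
lemma Df_antitone : AntitoneOn Df (Set.Icc (3/2:ℝ) (391/100)) := by
  apply antitoneOn_of_deriv_nonpos (convex_Icc _ _)
  · intro x hx
    exact (hasDerivAt_Df (by linarith [hx.1] : (0:ℝ) ≤ x)).continuousAt.continuousWithinAt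
  · intro x hx
    rw [interior_Icc] at hx
    exact (hasDerivAt_Df (by linarith [hx.1] : (0:ℝ) ≤ x)).differentiableAt.differentiableWithinAt
  · intro x hx
    rw [interior_Icc] at hx
    rw [(hasDerivAt_Df (by linarith [hx.1] : (0:ℝ) ≤ x)).deriv]
    have := conc_on (le_of_lt hx.1) (le_of_lt hx.2)
    linarith

lemma Df_x0_bounds : -0.0000060 ≤ Df 2.513 ∧ Df 2.513 ≤ 0 := by
  unfold Df
  have h1 := exp_x0_lo
  have h2 := exp_x0_hi
  norm_num
  constructor <;> linarith

lemma Hf_x0 : Hf 2.513 ≤ 0.2036340 := by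
  unfold Hf
  have h1 := exp_x0_lo
  norm_num
  linarith

lemma H_le_B {x : ℝ} (h1 : 3/2 ≤ x) (h2 : x ≤ 391/100) : Hf x ≤ 0.203715 := by
  obtain ⟨hdlo, hdhi⟩ := Df_x0_bounds
  have hx0 : Hf 2.513 ≤ 0.2036340 := Hf_x0
  rcases lt_trichotomy x 2.513 with hlt | heq | hgt
  · -- MVT on [x, 2.513]
    obtain ⟨c, hc, hceq⟩ := exists_hasDerivAt_eq_slope Hf Df hlt
      (fun y hy => (hasDerivAt_Hf (by linarith [hy.1] : (0:ℝ) ≤ y)).continuousAt.continuousWithinAt)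
      (fun y hy => hasDerivAt_Hf (by linarith [hy.1] : (0:ℝ) ≤ y))
    have hDc : Df 2.513 ≤ Df c := by
      exact Df_antitone ⟨by linarith [hc.1], by linarith [hc.2]⟩
        ⟨by norm_num, by norm_num⟩ (le_of_lt hc.2)
    -- Df c = (Hf 2.513 - Hf x)/(2.513 - x)
    have hpos : (0:ℝ) < 2.513 - x := by linarith
    have : Hf x = Hf 2.513 - Df c * (2.513 - x) := by
      field_simp at hceq
      nlinarith [hceq]
    rw [this]
    nlinarith [hDc, hdlo, hpos, (by linarith : 2.513 - x ≤ 1.013)]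
  · rw [heq]; linarith
  · obtain ⟨c, hc, hceq⟩ := exists_hasDerivAt_eq_slope Hf Df hgt
      (fun y hy => (hasDerivAt_Hf (by linarith [hy.1] : (0:ℝ) ≤ y)).continuousAt.continuousWithinAt)
      (fun y hy => hasDerivAt_Hf (by linarith [hy.1] : (0:ℝ) ≤ y))
    have hDc : Df c ≤ Df 2.513 := by
      exact Df_antitone ⟨by norm_num, by norm_num⟩
        ⟨by linarith [hc.1], by linarith [hc.2]⟩ (le_of_lt hc.1)
    have hpos : (0:ℝ) < x - 2.513 := by linarith
    have : Hf x = Hf 2.513 + Df c * (x - 2.513) := by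
      field_simp at hceq
      nlinarith [hceq]
    rw [this]
    nlinarith [hDc, hdhi, hpos]

lemma Hf_nonneg {x : ℝ} (hx : 0 ≤ x) : 0 ≤ (1+x)⁻¹ - Real.exp (-x) := by
  have h := Real.add_one_le_exp x
  rw [Real.exp_neg]
  have h2 : (Real.exp x)⁻¹ ≤ (1+x)⁻¹ := inv_anti₀ (by linarith) (by linarith)
  linarith

lemma scalar_key (x : ℝ) (hx : 0 ≤ x) : ((1+x)⁻¹ - Real.exp (-x))^2 ≤ 0.0415 := by
  have h0 := Hf_nonneg hx
  have hle : (1+x)⁻¹ - Real.exp (-x) ≤ 0.203715 := by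
    rcases le_total x (3/2) with h | h
    · exact H_le_A hx h
    rcases le_total x (391/100) with h' | h'
    · exact H_le_B h h'
    · have he : (0:ℝ) < Real.exp (-x) := Real.exp_pos _
      have hi : (1+x)⁻¹ ≤ ((1:ℝ)+391/100)⁻¹ := inv_anti₀ (by norm_num) (by linarith)
      have : ((1:ℝ)+391/100)⁻¹ ≤ 0.203715 := by norm_num
      linarith
  nlinarith
section conj
variable {n : ℕ} {U : Matrix (Fin n) (Fin n) ℝ}

lemma conj_mul (h1 : star U * U = 1) (v w : Fin n → ℝ) :
    (U * diagonal v * star U) * (U * diagonal w * star U)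
      = U * diagonal (fun i => v i * w i) * star U := by
  have : (U * diagonal v * star U) * (U * diagonal w * star U)
      = U * (diagonal v * (star U * U) * diagonal w) * star U := by
    simp only [Matrix.mul_assoc]
  rw [this, h1, Matrix.mul_one, diagonal_mul_diagonal]

lemma conj_one (h2 : U * star U = 1) :
    (1 : Matrix (Fin n) (Fin n) ℝ) = U * diagonal (fun _ => 1) * star U := by
  rw [diagonal_one, Matrix.mul_one, h2]

lemma conj_inv (h1 : star U * U = 1) (h2 : U * star U = 1) (v : Fin n → ℝ)
    (hv : ∀ i, v i ≠ 0) :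
    (U * diagonal v * star U)⁻¹ = U * diagonal (fun i => (v i)⁻¹) * star U := by
  apply inv_eq_right_inv
  rw [conj_mul h1]
  have : (fun i => v i * (v i)⁻¹) = fun _ : Fin n => (1:ℝ) := by
    funext i; exact mul_inv_cancel₀ (hv i)
  rw [this, ← conj_one h2]

lemma conj_sub (v w : Fin n → ℝ) :
    (U * diagonal v * star U) - (U * diagonal w * star U)
      = U * diagonal (fun i => v i - w i) * star U := by
  rw [← Matrix.sub_mul, ← Matrix.mul_sub, ← diagonal_sub]

lemma conj_add (v w : Fin n → ℝ) :
    (U * diagonal v * star U) + (U * diagonal w * star U)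
      = U * diagonal (fun i => v i + w i) * star U := by
  rw [← Matrix.add_mul, ← Matrix.mul_add, ← diagonal_add]

lemma conj_smul (c : ℝ) (v : Fin n → ℝ) :
    c • (U * diagonal v * star U) = U * diagonal (fun i => c * v i) * star U := by
  have h : (fun i => c * v i) = c • v := rfl
  rw [h, diagonal_smul, Matrix.mul_smul, Matrix.smul_mul]

lemma conj_exp (h1 : star U * U = 1) (h2 : U * star U = 1) (v : Fin n → ℝ) :
    NormedSpace.exp (U * diagonal v * star U)
      = U * diagonal (fun i => Real.exp (v i)) * star U := by
  have hUnit : IsUnit U := ⟨⟨U, star U, h2, h1⟩, rfl⟩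
  have hUinv : U⁻¹ = star U := inv_eq_right_inv h2
  have hv : NormedSpace.exp v = fun i => Real.exp (v i) := by
    funext i
    rw [Pi.coe_exp]
    exact (congrFun Real.exp_eq_exp_ℝ (v i)).symm
  rw [← hUinv, Matrix.exp_conj U (diagonal v) hUnit, Matrix.exp_diagonal, hv]

lemma sum_sq_mulVec (h1 : star U * U = 1) (v : Fin n → ℝ) :
    ∑ i, (U *ᵥ v) i ^ 2 = ∑ i, v i ^ 2 := by
  have hT : Uᵀ = star U := by
    ext i j
    simp [Matrix.star_apply]
  have h : (U *ᵥ v) ⬝ᵥ (U *ᵥ v) = v ⬝ᵥ v := by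
    rw [dotProduct_mulVec, ← mulVec_transpose, hT, mulVec_mulVec, h1, one_mulVec]
  simpa [dotProduct, pow_two] using h

end conj

end KGFBound

open KGFBound in
/-- `‖α_KGF(t) − α_KRR(1/t)‖₂² ≤ 0.0415 · ‖K⁻¹y‖₂²` for symmetric positive definite `K`. -/
theorem kgf_krr_alpha_difference_bound (n : ℕ) (K : Matrix (Fin n) (Fin n) ℝ)
    (hK : K.PosDef) (t : ℝ) (ht : 0 < t) (y : Fin n → ℝ) :
    let αKGF : Fin n → ℝ :=
      (((1 : Matrix (Fin n) (Fin n) ℝ) - NormedSpace.exp (-(t • K))) * K⁻¹) *ᵥ y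
    let αKRR : Fin n → ℝ :=
      (K + (1 / t) • (1 : Matrix (Fin n) (Fin n) ℝ))⁻¹ *ᵥ y
    ∑ i, (αKGF i - αKRR i) ^ 2 ≤ 0.0415 * ∑ i, (K⁻¹ *ᵥ y) i ^ 2 := by
  intro αKGF αKRR
  have hH : K.IsHermitian := hK.1
  set U : Matrix (Fin n) (Fin n) ℝ := (hH.eigenvectorUnitary : Matrix (Fin n) (Fin n) ℝ)
    with hUdef
  set d : Fin n → ℝ := hH.eigenvalues with hddef
  have h1 : star U * U = 1 := Unitary.coe_star_mul_self hH.eigenvectorUnitary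
  have h2 : U * star U = 1 := Unitary.coe_mul_star_self hH.eigenvectorUnitary
  have hdpos : ∀ i, 0 < d i := fun i => hK.eigenvalues_pos i
  have hspec : K = U * diagonal d * star U := by
    have := hH.spectral_theorem
    simpa using this
  have hKinv : K⁻¹ = U * diagonal (fun i => (d i)⁻¹) * star U := by
    rw [hspec, conj_inv h1 h2 _ (fun i => (hdpos i).ne')]
  have hmt : -(t • K) = U * diagonal (fun i => -(t * d i)) * star U := by
    rw [hspec, conj_smul t d, ← diagonal_neg, Matrix.mul_neg, Matrix.neg_mul]
  have hexp : NormedSpace.exp (-(t • K))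
      = U * diagonal (fun i => Real.exp (-(t * d i))) * star U := by
    rw [hmt, conj_exp h1 h2]
  have hreg : K + (1/t) • (1 : Matrix (Fin n) (Fin n) ℝ)
      = U * diagonal (fun i => d i + 1/t) * star U := by
    rw [hspec, conj_one h2, conj_smul (1/t), conj_add]
    congr 1
    funext i
    simp
  have htpos : (0:ℝ) < 1/t := by positivity
  have hreginv : (K + (1/t) • (1 : Matrix (Fin n) (Fin n) ℝ))⁻¹
      = U * diagonal (fun i => (d i + 1/t)⁻¹) * star U := by
    rw [hreg]
    refine conj_inv h1 h2 _ (fun i => ?_)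
    have := hdpos i
    positivity
  set φ : Fin n → ℝ := fun i => (1 - Real.exp (-(t * d i))) * (d i)⁻¹ - (d i + 1/t)⁻¹
    with hφdef
  have hdiffM : ((1 : Matrix (Fin n) (Fin n) ℝ) - NormedSpace.exp (-(t • K))) * K⁻¹
      - (K + (1/t) • (1 : Matrix (Fin n) (Fin n) ℝ))⁻¹ = U * diagonal φ * star U := by
    rw [hexp, hKinv, hreginv, conj_one h2, conj_sub, conj_mul h1, conj_sub]
  set w : Fin n → ℝ := star U *ᵥ y with hw
  have hGFR : (fun i => αKGF i - αKRR i) = U *ᵥ (fun j => φ j * w j) := by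
    funext i
    have hsub : αKGF i - αKRR i
        = ((((1 : Matrix (Fin n) (Fin n) ℝ) - NormedSpace.exp (-(t • K))) * K⁻¹
          - (K + (1/t) • (1 : Matrix (Fin n) (Fin n) ℝ))⁻¹) *ᵥ y) i := by
      rw [sub_mulVec]
      rfl
    rw [hsub, hdiffM, ← mulVec_mulVec, ← mulVec_mulVec]
    congr 1
    funext j
    rw [← hw, mulVec_diagonal]
  have hdiagv : (diagonal fun i => (d i)⁻¹) *ᵥ w = fun j => (d j)⁻¹ * w j := by
    funext j
    rw [mulVec_diagonal]
  have hKiv : K⁻¹ *ᵥ y = U *ᵥ (fun j => (d j)⁻¹ * w j) := by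
    rw [hKinv, ← mulVec_mulVec, ← mulVec_mulVec, ← hw, hdiagv]
  have hL : ∑ i, (αKGF i - αKRR i) ^ 2 = ∑ i, (φ i * w i) ^ 2 := by
    calc ∑ i, (αKGF i - αKRR i) ^ 2 = ∑ i, (U *ᵥ (fun j => φ j * w j)) i ^ 2 := by
          rw [← hGFR]
      _ = ∑ i, (φ i * w i) ^ 2 := sum_sq_mulVec h1 _
  have hR : ∑ i, (K⁻¹ *ᵥ y) i ^ 2 = ∑ i, ((d i)⁻¹ * w i) ^ 2 := by
    rw [hKiv]
    exact sum_sq_mulVec h1 _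
  rw [hL, hR, Finset.mul_sum]
  apply Finset.sum_le_sum
  intro i _
  have hdi := hdpos i
  have hx : (0:ℝ) ≤ t * d i := by positivity
  have key := scalar_key (t * d i) hx
  have hφeq : φ i = (d i)⁻¹ * ((1 + t * d i)⁻¹ - Real.exp (-(t * d i))) := by
    rw [hφdef]
    have h1t : (0:ℝ) < d i + 1/t := by positivity
    have h2t : (0:ℝ) < 1 + t * d i := by positivity
    field_simp
    ring
  have hsq : φ i ^ 2 ≤ 0.0415 * ((d i)⁻¹) ^ 2 := by
    rw [hφeq, mul_pow]
    calc ((d i)⁻¹)^2 * ((1 + t * d i)⁻¹ - Real.exp (-(t * d i)))^2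
        ≤ ((d i)⁻¹)^2 * 0.0415 := by
          apply mul_le_mul_of_nonneg_left key (sq_nonneg _)
      _ = 0.0415 * ((d i)⁻¹)^2 := mul_comm _ _
  calc (φ i * w i)^2 = φ i ^2 * w i ^2 := by ring
    _ ≤ (0.0415 * ((d i)⁻¹)^2) * w i ^2 := by
        apply mul_le_mul_of_nonneg_right hsq (sq_nonneg _)
    _ = 0.0415 * ((d i)⁻¹ * w i)^2 := by ring
end

section
/- Let K be symmetric positive definite, t > 0, y ∈ ℝ^n. Define f_KGF(t) = K(I − exp(−tK))K⁻¹y = (I − exp(−tK))y and f_KRR(1/t) = K(K + (1/t)I)⁻¹y. Then ‖f_KGF(t) − f_KRR(1/t)‖₂² ≤ 0.0415 · ‖y‖₂². -/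
lemma exp_neg_lb (x : ℝ) (h0 : 0 ≤ x) (h1 : x ≤ 1) :
    1 - x + x^2/2 - x^3/6 + x^4/24 - x^5/100 ≤ Real.exp (-x) := by
  have hb := Real.exp_bound (x := -x) (by rwa [abs_neg, abs_of_nonneg h0]) (n := 5) (by norm_num)
  rw [abs_neg, abs_of_nonneg h0] at hb
  have h2 := (abs_sub_le_iff.1 hb).2
  have hsum : ∑ m ∈ Finset.range 5, (-x) ^ m / m.factorial
      = 1 - x + x^2/2 - x^3/6 + x^4/24 := by
    simp [Finset.sum_range_succ, Nat.factorial]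
    ring
  rw [hsum] at h2
  norm_num [Nat.factorial, Nat.succ_eq_add_one] at h2
  nlinarith [h2]

lemma exp_quarter_pow_lb (k : ℕ) : (79749/102400 : ℝ)^k ≤ Real.exp (-(k/4 : ℝ)) := by
  have h1 : (-(k/4 : ℝ)) = k * (-(1/4)) := by ring
  have h2 : (79749/102400 : ℝ) ≤ Real.exp (-(1/4)) := by
    have h := exp_neg_lb (1/4) (by norm_num) (by norm_num)
    nlinarith [h]
  rw [h1, Real.exp_nat_mul]
  exact pow_le_pow_left₀ (by norm_num) h2 k

lemma hcase (a q s : ℝ) (ha0 : 0 ≤ a) (hq0 : 0 ≤ q) (hq : q ≤ Real.exp (-a))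
    (hs1 : a ≤ s) (hs2 : s ≤ a + 1/2)
    (hpoly : 1 ≤ (20371/100000 +
      q*(1-(s-a)+(s-a)^2/2-(s-a)^3/6+(s-a)^4/24-(s-a)^5/100))*(1+s)) :
    1/(1+s) - Real.exp (-s) ≤ 20371/100000 := by
  have h1s : (0:ℝ) < 1 + s := by linarith
  have hu : (0:ℝ) ≤ s - a := by linarith
  have hw : (0:ℝ) ≤ 1/2 - (s - a) := by linarith
  have hx := exp_neg_lb (s-a) (by linarith) (by linarith)
  have hBpos : (0:ℝ) ≤ 1-(s-a)+(s-a)^2/2-(s-a)^3/6+(s-a)^4/24-(s-a)^5/100 := by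
    nlinarith [sq_nonneg (s-a), mul_nonneg (mul_nonneg hu hu) hw,
      pow_nonneg hu 4, mul_nonneg (pow_nonneg hu 4) hw]
  have hsplit : Real.exp (-s) = Real.exp (-a) * Real.exp (-(s-a)) := by
    rw [← Real.exp_add]; ring_nf
  have hqB : q*(1-(s-a)+(s-a)^2/2-(s-a)^3/6+(s-a)^4/24-(s-a)^5/100) ≤ Real.exp (-s) := by
    rw [hsplit]
    exact mul_le_mul hq hx hBpos (Real.exp_pos _).le
  have hfrac : 1/(1+s) ≤ 20371/100000 +
      q*(1-(s-a)+(s-a)^2/2-(s-a)^3/6+(s-a)^4/24-(s-a)^5/100) := by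
    rw [div_le_iff₀ h1s]
    linarith
  linarith

set_option maxHeartbeats 1000000 in
lemma poly_0 (s : ℝ) (ha : (0 : ℝ) ≤ s) (hb : s ≤ (1/2 : ℝ)) :
    1 ≤ (20371/100000 +
      (1 : ℝ)*(1-(s-(0 : ℝ))+(s-(0 : ℝ))^2/2-(s-(0 : ℝ))^3/6+(s-(0 : ℝ))^4/24-(s-(0 : ℝ))^5/100))*(1+s) := by
  nlinarith [sq_nonneg (s-(0 : ℝ)), sq_nonneg (s-(1/2 : ℝ)), sq_nonneg (s-(1/4 : ℝ)),
    mul_nonneg (sub_nonneg.2 ha) (sub_nonneg.2 hb), sq_nonneg ((s-(0 : ℝ))*(s-(1/2 : ℝ))),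
    mul_nonneg (mul_nonneg (sub_nonneg.2 ha) (sub_nonneg.2 ha)) (sub_nonneg.2 hb)]

set_option maxHeartbeats 1000000 in
lemma expq_0 : ((1 : ℝ)) ≤ Real.exp (-(0 : ℝ)) := by
  have h := exp_quarter_pow_lb 0
  have e : ((0:ℕ)/4 : ℝ) = (0 : ℝ) := by norm_num
  rw [e] at h
  refine le_trans (by norm_num) h

set_option maxHeartbeats 1000000 in
lemma poly_2 (s : ℝ) (ha : (1/2 : ℝ) ≤ s) (hb : s ≤ (1 : ℝ)) :
    1 ≤ (20371/100000 +
      (1516319/2500000 : ℝ)*(1-(s-(1/2 : ℝ))+(s-(1/2 : ℝ))^2/2-(s-(1/2 : ℝ))^3/6+(s-(1/2 : ℝ))^4/24-(s-(1/2 : ℝ))^5/100))*(1+s) := by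
  nlinarith [sq_nonneg (s-(1/2 : ℝ)), sq_nonneg (s-(1 : ℝ)), sq_nonneg (s-(3/4 : ℝ)),
    mul_nonneg (sub_nonneg.2 ha) (sub_nonneg.2 hb), sq_nonneg ((s-(1/2 : ℝ))*(s-(1 : ℝ))),
    mul_nonneg (mul_nonneg (sub_nonneg.2 ha) (sub_nonneg.2 ha)) (sub_nonneg.2 hb)]

set_option maxHeartbeats 1000000 in
lemma expq_2 : ((1516319/2500000 : ℝ)) ≤ Real.exp (-(1/2 : ℝ)) := by
  have h := exp_quarter_pow_lb 2
  have e : ((2:ℕ)/4 : ℝ) = (1/2 : ℝ) := by norm_num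
  rw [e] at h
  refine le_trans (by norm_num) h

set_option maxHeartbeats 1000000 in
lemma poly_4 (s : ℝ) (ha : (1 : ℝ) ≤ s) (hb : s ≤ (3/2 : ℝ)) :
    1 ≤ (20371/100000 +
      (3678757/10000000 : ℝ)*(1-(s-(1 : ℝ))+(s-(1 : ℝ))^2/2-(s-(1 : ℝ))^3/6+(s-(1 : ℝ))^4/24-(s-(1 : ℝ))^5/100))*(1+s) := by
  nlinarith [sq_nonneg (s-(1 : ℝ)), sq_nonneg (s-(3/2 : ℝ)), sq_nonneg (s-(5/4 : ℝ)),
    mul_nonneg (sub_nonneg.2 ha) (sub_nonneg.2 hb), sq_nonneg ((s-(1 : ℝ))*(s-(3/2 : ℝ))),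
    mul_nonneg (mul_nonneg (sub_nonneg.2 ha) (sub_nonneg.2 ha)) (sub_nonneg.2 hb)]

set_option maxHeartbeats 1000000 in
lemma expq_4 : ((3678757/10000000 : ℝ)) ≤ Real.exp (-(1 : ℝ)) := by
  have h := exp_quarter_pow_lb 4
  have e : ((4:ℕ)/4 : ℝ) = (1 : ℝ) := by norm_num
  rw [e] at h
  refine le_trans (by norm_num) h

set_option maxHeartbeats 1000000 in
lemma poly_6 (s : ℝ) (ha : (3/2 : ℝ) ≤ s) (hb : s ≤ (2 : ℝ)) :
    1 ≤ (20371/100000 +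
      (2231267/10000000 : ℝ)*(1-(s-(3/2 : ℝ))+(s-(3/2 : ℝ))^2/2-(s-(3/2 : ℝ))^3/6+(s-(3/2 : ℝ))^4/24-(s-(3/2 : ℝ))^5/100))*(1+s) := by
  nlinarith [sq_nonneg (s-(3/2 : ℝ)), sq_nonneg (s-(2 : ℝ)), sq_nonneg (s-(7/4 : ℝ)),
    mul_nonneg (sub_nonneg.2 ha) (sub_nonneg.2 hb), sq_nonneg ((s-(3/2 : ℝ))*(s-(2 : ℝ))),
    mul_nonneg (mul_nonneg (sub_nonneg.2 ha) (sub_nonneg.2 ha)) (sub_nonneg.2 hb)]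

set_option maxHeartbeats 1000000 in
lemma expq_6 : ((2231267/10000000 : ℝ)) ≤ Real.exp (-(3/2 : ℝ)) := by
  have h := exp_quarter_pow_lb 6
  have e : ((6:ℕ)/4 : ℝ) = (3/2 : ℝ) := by norm_num
  rw [e] at h
  refine le_trans (by norm_num) h

set_option maxHeartbeats 1000000 in
lemma poly_8 (s : ℝ) (ha : (2 : ℝ) ≤ s) (hb : s ≤ (5/2 : ℝ)) :
    1 ≤ (20371/100000 +
      (54133/400000 : ℝ)*(1-(s-(2 : ℝ))+(s-(2 : ℝ))^2/2-(s-(2 : ℝ))^3/6+(s-(2 : ℝ))^4/24-(s-(2 : ℝ))^5/100))*(1+s) := by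
  nlinarith [sq_nonneg (s-(2 : ℝ)), sq_nonneg (s-(5/2 : ℝ)), sq_nonneg (s-(9/4 : ℝ)),
    mul_nonneg (sub_nonneg.2 ha) (sub_nonneg.2 hb), sq_nonneg ((s-(2 : ℝ))*(s-(5/2 : ℝ))),
    mul_nonneg (mul_nonneg (sub_nonneg.2 ha) (sub_nonneg.2 ha)) (sub_nonneg.2 hb)]

set_option maxHeartbeats 1000000 in
lemma expq_8 : ((54133/400000 : ℝ)) ≤ Real.exp (-(2 : ℝ)) := by
  have h := exp_quarter_pow_lb 8
  have e : ((8:ℕ)/4 : ℝ) = (2 : ℝ) := by norm_num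
  rw [e] at h
  refine le_trans (by norm_num) h

set_option maxHeartbeats 1000000 in
lemma poly_10 (s : ℝ) (ha : (5/2 : ℝ) ≤ s) (hb : s ≤ (3 : ℝ)) :
    1 ≤ (20371/100000 +
      (820829/10000000 : ℝ)*(1-(s-(5/2 : ℝ))+(s-(5/2 : ℝ))^2/2-(s-(5/2 : ℝ))^3/6+(s-(5/2 : ℝ))^4/24-(s-(5/2 : ℝ))^5/100))*(1+s) := by
  nlinarith [sq_nonneg (s-(5/2 : ℝ)), sq_nonneg (s-(3 : ℝ)), sq_nonneg (s-(11/4 : ℝ)),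
    mul_nonneg (sub_nonneg.2 ha) (sub_nonneg.2 hb), sq_nonneg ((s-(5/2 : ℝ))*(s-(3 : ℝ))),
    mul_nonneg (mul_nonneg (sub_nonneg.2 ha) (sub_nonneg.2 ha)) (sub_nonneg.2 hb)]

set_option maxHeartbeats 1000000 in
lemma expq_10 : ((820829/10000000 : ℝ)) ≤ Real.exp (-(5/2 : ℝ)) := by
  have h := exp_quarter_pow_lb 10
  have e : ((10:ℕ)/4 : ℝ) = (5/2 : ℝ) := by norm_num
  rw [e] at h
  refine le_trans (by norm_num) h

set_option maxHeartbeats 1000000 in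
lemma poly_12 (s : ℝ) (ha : (3 : ℝ) ≤ s) (hb : s ≤ (7/2 : ℝ)) :
    1 ≤ (20371/100000 +
      (99571/2000000 : ℝ)*(1-(s-(3 : ℝ))+(s-(3 : ℝ))^2/2-(s-(3 : ℝ))^3/6+(s-(3 : ℝ))^4/24-(s-(3 : ℝ))^5/100))*(1+s) := by
  nlinarith [sq_nonneg (s-(3 : ℝ)), sq_nonneg (s-(7/2 : ℝ)), sq_nonneg (s-(13/4 : ℝ)),
    mul_nonneg (sub_nonneg.2 ha) (sub_nonneg.2 hb), sq_nonneg ((s-(3 : ℝ))*(s-(7/2 : ℝ))),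
    mul_nonneg (mul_nonneg (sub_nonneg.2 ha) (sub_nonneg.2 ha)) (sub_nonneg.2 hb)]

set_option maxHeartbeats 1000000 in
lemma expq_12 : ((99571/2000000 : ℝ)) ≤ Real.exp (-(3 : ℝ)) := by
  have h := exp_quarter_pow_lb 12
  have e : ((12:ℕ)/4 : ℝ) = (3 : ℝ) := by norm_num
  rw [e] at h
  refine le_trans (by norm_num) h

set_option maxHeartbeats 1000000 in
lemma poly_14 (s : ℝ) (ha : (7/2 : ℝ) ≤ s) (hb : s ≤ (4 : ℝ)) :
    1 ≤ (20371/100000 +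
      (301963/10000000 : ℝ)*(1-(s-(7/2 : ℝ))+(s-(7/2 : ℝ))^2/2-(s-(7/2 : ℝ))^3/6+(s-(7/2 : ℝ))^4/24-(s-(7/2 : ℝ))^5/100))*(1+s) := by
  nlinarith [sq_nonneg (s-(7/2 : ℝ)), sq_nonneg (s-(4 : ℝ)), sq_nonneg (s-(15/4 : ℝ)),
    mul_nonneg (sub_nonneg.2 ha) (sub_nonneg.2 hb), sq_nonneg ((s-(7/2 : ℝ))*(s-(4 : ℝ))),
    mul_nonneg (mul_nonneg (sub_nonneg.2 ha) (sub_nonneg.2 ha)) (sub_nonneg.2 hb)]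

set_option maxHeartbeats 1000000 in
lemma expq_14 : ((301963/10000000 : ℝ)) ≤ Real.exp (-(7/2 : ℝ)) := by
  have h := exp_quarter_pow_lb 14
  have e : ((14:ℕ)/4 : ℝ) = (7/2 : ℝ) := by norm_num
  rw [e] at h
  refine le_trans (by norm_num) h

lemma key_scalar (s : ℝ) (hs : 0 ≤ s) :
    1/(1+s) - Real.exp (-s) ≤ 20371/100000 := by
  have h1s : (0:ℝ) < 1 + s := by linarith
  rcases le_or_gt s (1/2 : ℝ) with hb0 | ha0
  · exact hcase (0 : ℝ) (1 : ℝ) s (by norm_num) (by norm_num) expq_0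
      (by linarith) (by linarith) (poly_0 s (by linarith) (by linarith))
  rcases le_or_gt s (1 : ℝ) with hb2 | ha2
  · exact hcase (1/2 : ℝ) (1516319/2500000 : ℝ) s (by norm_num) (by norm_num) expq_2
      (by linarith) (by linarith) (poly_2 s (by linarith) (by linarith))
  rcases le_or_gt s (3/2 : ℝ) with hb4 | ha4
  · exact hcase (1 : ℝ) (3678757/10000000 : ℝ) s (by norm_num) (by norm_num) expq_4
      (by linarith) (by linarith) (poly_4 s (by linarith) (by linarith))
  rcases le_or_gt s (2 : ℝ) with hb6 | ha6
  · exact hcase (3/2 : ℝ) (2231267/10000000 : ℝ) s (by norm_num) (by norm_num) expq_6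
      (by linarith) (by linarith) (poly_6 s (by linarith) (by linarith))
  rcases le_or_gt s (5/2 : ℝ) with hb8 | ha8
  · exact hcase (2 : ℝ) (54133/400000 : ℝ) s (by norm_num) (by norm_num) expq_8
      (by linarith) (by linarith) (poly_8 s (by linarith) (by linarith))
  rcases le_or_gt s (3 : ℝ) with hb10 | ha10
  · exact hcase (5/2 : ℝ) (820829/10000000 : ℝ) s (by norm_num) (by norm_num) expq_10
      (by linarith) (by linarith) (poly_10 s (by linarith) (by linarith))
  rcases le_or_gt s (7/2 : ℝ) with hb12 | ha12
  · exact hcase (3 : ℝ) (99571/2000000 : ℝ) s (by norm_num) (by norm_num) expq_12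
      (by linarith) (by linarith) (poly_12 s (by linarith) (by linarith))
  rcases le_or_gt s (4 : ℝ) with hb14 | ha14
  · exact hcase (7/2 : ℝ) (301963/10000000 : ℝ) s (by norm_num) (by norm_num) expq_14
      (by linarith) (by linarith) (poly_14 s (by linarith) (by linarith))
  · have hfive : 1/(1+s) ≤ 1/5 := by
      rw [div_le_div_iff₀ h1s (by norm_num)]
      linarith
    have := Real.exp_pos (-s)
    linarith

open Matrix

lemma exp_neg_le_inv (s : ℝ) (hs : 0 ≤ s) : Real.exp (-s) ≤ 1/(1+s) := by
  have h1 : s + 1 ≤ Real.exp s := Real.add_one_le_exp s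
  have h2 : (0:ℝ) < 1 + s := by linarith
  calc Real.exp (-s) = (Real.exp s)⁻¹ := Real.exp_neg s
    _ ≤ (1+s)⁻¹ := by
        apply inv_anti₀ h2
        linarith
    _ = 1/(1+s) := (one_div _).symm

lemma aux_frac (a t : ℝ) (ht : 0 < t) (ha : 0 < a) :
    a * (a + 1/t)⁻¹ = 1 - 1/(1 + t * a) := by
  have h1 : a + 1/t ≠ 0 := by positivity
  have h2 : (1:ℝ) + t * a ≠ 0 := by positivity
  rw [eq_sub_iff_add_eq]
  field_simp
  ring

lemma key_sq (s : ℝ) (hs : 0 ≤ s) : (1/(1+s) - Real.exp (-s))^2 ≤ (0.0415:ℝ) := by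
  have h0 := exp_neg_le_inv s hs
  have h1 := key_scalar s hs
  nlinarith [h0, h1]

/-- `‖f_KGF(t) − f_KRR(1/t)‖₂² ≤ 0.0415 · ‖y‖₂²` for symmetric positive definite `K`. -/
theorem kgf_krr_prediction_difference_bound (n : ℕ) (K : Matrix (Fin n) (Fin n) ℝ)
    (hK : K.PosDef) (t : ℝ) (ht : 0 < t) (y : Fin n → ℝ) :
    let fKGF : Fin n → ℝ :=
      ((1 : Matrix (Fin n) (Fin n) ℝ) - NormedSpace.exp (-(t • K))) *ᵥ y
    let fKRR : Fin n → ℝ :=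
      (K * (K + (1 / t) • (1 : Matrix (Fin n) (Fin n) ℝ))⁻¹) *ᵥ y
    ∑ i, (fKGF i - fKRR i) ^ 2 ≤ 0.0415 * ∑ i, y i ^ 2 := by
  intro fKGF fKRR
  have hH : K.IsHermitian := hK.1
  set μ : Fin n → ℝ := hH.eigenvalues with hμdef
  set U : Matrix (Fin n) (Fin n) ℝ := (hH.eigenvectorUnitary : Matrix (Fin n) (Fin n) ℝ)
    with hUdef
  have hμpos : ∀ i, 0 < μ i := hK.eigenvalues_pos
  have hU1 : star U * U = 1 := mem_unitaryGroup_iff'.mp hH.eigenvectorUnitary.2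
  have hU2 : U * star U = 1 := mem_unitaryGroup_iff.mp hH.eigenvectorUnitary.2
  have hspec : K = U * diagonal μ * star U := by
    have h := hH.spectral_theorem
    rwa [RCLike.ofReal_real_eq_id, Function.id_comp] at h
  -- conjugation algebra
  have hmulM : ∀ d e : Fin n → ℝ, (U * diagonal d * star U) * (U * diagonal e * star U)
      = U * diagonal (fun i => d i * e i) * star U := by
    intro d e
    have : (U * diagonal d * star U) * (U * diagonal e * star U)
        = U * (diagonal d * (star U * U) * diagonal e) * star U := by
      noncomm_ring
    rw [this, hU1, mul_one, diagonal_mul_diagonal]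
  have hone : (1 : Matrix (Fin n) (Fin n) ℝ) = U * diagonal (fun _ => (1:ℝ)) * star U := by
    rw [diagonal_one, mul_one, hU2]
  have hsubM : ∀ d e : Fin n → ℝ, (U * diagonal d * star U) - (U * diagonal e * star U)
      = U * diagonal (fun i => d i - e i) * star U := by
    intro d e
    rw [← diagonal_sub, Matrix.mul_sub, Matrix.sub_mul]
  have hUunit : IsUnit U := ⟨⟨U, star U, hU2, hU1⟩, rfl⟩
  have hUinv : U⁻¹ = star U := inv_eq_left_inv hU1
  have hexpM : ∀ d : Fin n → ℝ, NormedSpace.exp (U * diagonal d * star U)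
      = U * diagonal (fun i => Real.exp (d i)) * star U := by
    intro d
    rw [← hUinv, Matrix.exp_conj U (diagonal d) hUunit, Matrix.exp_diagonal, Pi.exp_def]
    simp only [← Real.exp_eq_exp_ℝ]
  -- the matrices
  have e1 : -(t • K) = U * diagonal (fun i => -(t * μ i)) * star U := by
    have hDD : diagonal (fun i => -(t * μ i)) = -(t • diagonal μ) := by
      ext i j
      by_cases h : i = j <;> simp [Matrix.diagonal_apply, h]
    rw [hspec, hDD, mul_neg, neg_mul, mul_smul_comm, smul_mul_assoc]
  have e2 : NormedSpace.exp (-(t • K)) = U * diagonal (fun i => Real.exp (-(t * μ i)))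
      * star U := by rw [e1, hexpM]
  have e4 : K + (1/t) • (1 : Matrix (Fin n) (Fin n) ℝ)
      = U * diagonal (fun i => μ i + 1/t) * star U := by
    have hDA : diagonal (fun i => μ i + 1/t)
        = diagonal μ + (1/t) • diagonal (fun _ => (1:ℝ)) := by
      ext i j
      by_cases h : i = j <;> simp [Matrix.diagonal_apply, h]
    rw [hspec, hone, hDA, mul_add, mul_smul_comm, Matrix.add_mul, smul_mul_assoc]
  have e5 : (K + (1/t) • (1 : Matrix (Fin n) (Fin n) ℝ))⁻¹
      = U * diagonal (fun i => (μ i + 1/t)⁻¹) * star U := by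
    rw [e4]
    apply inv_eq_right_inv
    rw [hmulM]
    have : (fun i => (μ i + 1/t) * (μ i + 1/t)⁻¹) = fun _ => (1:ℝ) := by
      funext i
      exact mul_inv_cancel₀ (by have := hμpos i; positivity)
    rw [this, ← hone]
  have e6 : K * (K + (1/t) • (1 : Matrix (Fin n) (Fin n) ℝ))⁻¹
      = U * diagonal (fun i => μ i * (μ i + 1/t)⁻¹) * star U := by
    rw [e5, hspec, hmulM]
  set g : Fin n → ℝ := fun i => (1 - Real.exp (-(t * μ i))) - μ i * (μ i + 1/t)⁻¹ with hgdef
  have e7 : (1 : Matrix (Fin n) (Fin n) ℝ) - NormedSpace.exp (-(t • K))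
      - K * (K + (1/t) • (1 : Matrix (Fin n) (Fin n) ℝ))⁻¹
      = U * diagonal g * star U := by
    rw [e6, e2, hone, hsubM, hsubM]
  -- vectors
  set w : Fin n → ℝ := star U *ᵥ y with hwdef
  have hvec : ∀ i, fKGF i - fKRR i = (U *ᵥ (fun j => g j * w j)) i := by
    intro i
    have : fKGF i - fKRR i = ((U * diagonal g * star U) *ᵥ y) i := by
      rw [← e7, Matrix.sub_mulVec]
      rfl
    rw [this, ← Matrix.mulVec_mulVec, ← Matrix.mulVec_mulVec]
    congr 1
    funext j
    rw [← hwdef, Matrix.mulVec_diagonal]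
  -- orthogonality preserves sums of squares
  have hstarT : star U = Uᵀ := by
    rw [Matrix.star_eq_conjTranspose, conjTranspose_eq_transpose_of_trivial]
  have hpres : ∀ v : Fin n → ℝ, ∑ i, (U *ᵥ v) i ^ 2 = ∑ i, v i ^ 2 := by
    intro v
    have hdot : (U *ᵥ v) ⬝ᵥ (U *ᵥ v) = v ⬝ᵥ v := by
      rw [Matrix.dotProduct_mulVec, ← Matrix.mulVec_transpose, Matrix.mulVec_mulVec,
        ← hstarT, hU1, Matrix.one_mulVec]
    simpa [dotProduct, sq] using hdot
  have hpres' : ∑ i, w i ^ 2 = ∑ i, y i ^ 2 := by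
    have := hpres (star U *ᵥ y)
    rw [hwdef]
    calc ∑ i, (star U *ᵥ y) i ^ 2 = ∑ i, (U *ᵥ (star U *ᵥ y)) i ^ 2 := (hpres _).symm
      _ = ∑ i, y i ^ 2 := by rw [Matrix.mulVec_mulVec, hU2, Matrix.one_mulVec]
  -- eigenvalue-wise bound
  have hgbound : ∀ i, g i ^ 2 ≤ (0.0415 : ℝ) := by
    intro i
    have hs : 0 ≤ t * μ i := le_of_lt (mul_pos ht (hμpos i))
    have halg : g i = 1/(1 + t * μ i) - Real.exp (-(t * μ i)) := by
      have h1 : μ i + 1/t ≠ 0 := by have := hμpos i; positivity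
      have h2 : (1:ℝ) + t * μ i ≠ 0 := by have := hμpos i; positivity
      simp only [hgdef]
      rw [aux_frac (μ i) t ht (hμpos i)]
      ring
    rw [halg]
    exact key_sq (t * μ i) hs
  -- put it all together
  calc ∑ i, (fKGF i - fKRR i) ^ 2 = ∑ i, (U *ᵥ (fun j => g j * w j)) i ^ 2 := by
        apply Finset.sum_congr rfl
        intro i _
        rw [hvec i]
    _ = ∑ i, (g i * w i) ^ 2 := hpres _
    _ ≤ ∑ i, 0.0415 * w i ^ 2 := by
        apply Finset.sum_le_sum
        intro i _
        rw [mul_pow]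
        exact mul_le_mul_of_nonneg_right (hgbound i) (sq_nonneg _)
    _ = 0.0415 * ∑ i, w i ^ 2 := by rw [Finset.mul_sum]
    _ = 0.0415 * ∑ i, y i ^ 2 := by rw [hpres']
end

section
/- Let K be symmetric positive definite with largest eigenvalue s_max and t ≥ 0. Then sup over y ≠ 0 of ‖(I − (I + tK)⁻¹)y‖₂/‖y‖₂ = 1 − 1/(1 + t·s_max) ≤ 1 − e^{−t·s_max} = sup over y ≠ 0 of ‖(I − exp(−tK))y‖₂/‖y‖₂. -/
open Matrix

noncomputable def norm2 {n : ℕ} (v : Fin n → ℝ) : ℝ := Real.sqrt (∑ i, v i ^ 2)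

namespace KrrKgfAux

lemma norm2_nonneg {n : ℕ} (v : Fin n → ℝ) : 0 ≤ norm2 v := Real.sqrt_nonneg _

lemma norm2_pos {n : ℕ} {v : Fin n → ℝ} (hv : v ≠ 0) : 0 < norm2 v := by
  apply Real.sqrt_pos.mpr
  obtain ⟨i, hi⟩ := Function.ne_iff.mp hv
  exact Finset.sum_pos' (fun j _ => sq_nonneg _)
    ⟨i, Finset.mem_univ i, lt_of_le_of_ne (sq_nonneg _) (Ne.symm (pow_ne_zero 2 hi))⟩

lemma norm2_smul {n : ℕ} (c : ℝ) (v : Fin n → ℝ) : norm2 (c • v) = |c| * norm2 v := by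
  unfold norm2
  rw [← Real.sqrt_sq_eq_abs, ← Real.sqrt_mul (sq_nonneg c), Finset.mul_sum]
  congr 1
  refine Finset.sum_congr rfl fun i _ => ?_
  simp [mul_pow]

lemma dot_self_eq_sum_sq {n : ℕ} (v : Fin n → ℝ) : v ⬝ᵥ v = ∑ i, v i ^ 2 := by
  simp [dotProduct, sq]

lemma norm2_mulVec_orth {n : ℕ} {U : Matrix (Fin n) (Fin n) ℝ}
    (hU : Uᵀ * U = 1) (v : Fin n → ℝ) : norm2 (U *ᵥ v) = norm2 v := by
  unfold norm2
  congr 1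
  rw [← dot_self_eq_sum_sq, ← dot_self_eq_sum_sq]
  calc (U *ᵥ v) ⬝ᵥ (U *ᵥ v) = ((U *ᵥ v) ᵥ* U) ⬝ᵥ v := by
        rw [Matrix.dotProduct_mulVec]
    _ = ((v ᵥ* Uᵀ) ᵥ* U) ⬝ᵥ v := by rw [Matrix.vecMul_transpose]
    _ = (v ᵥ* (Uᵀ * U)) ⬝ᵥ v := by rw [Matrix.vecMul_vecMul]
    _ = v ⬝ᵥ v := by rw [hU, Matrix.vecMul_one]

lemma norm2_diag_le {n : ℕ} {d : Fin n → ℝ} {m : ℝ} (hm0 : 0 ≤ m)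
    (hm : ∀ i, |d i| ≤ m) (v : Fin n → ℝ) :
    norm2 (Matrix.diagonal d *ᵥ v) ≤ m * norm2 v := by
  unfold norm2
  have h : ∑ i, (Matrix.diagonal d *ᵥ v) i ^ 2 ≤ ∑ i, m ^ 2 * v i ^ 2 := by
    refine Finset.sum_le_sum fun i _ => ?_
    rw [Matrix.mulVec_diagonal, mul_pow]
    have : d i ^ 2 ≤ m ^ 2 := sq_le_sq' (by have := hm i; rw [abs_le] at this; linarith)
      (by have := hm i; rw [abs_le] at this; linarith)
    exact mul_le_mul_of_nonneg_right this (sq_nonneg _)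
  calc Real.sqrt (∑ i, (Matrix.diagonal d *ᵥ v) i ^ 2)
      ≤ Real.sqrt (∑ i, m ^ 2 * v i ^ 2) := Real.sqrt_le_sqrt h
    _ = m * Real.sqrt (∑ i, v i ^ 2) := by
        rw [← Finset.mul_sum, Real.sqrt_mul (sq_nonneg m), Real.sqrt_sq hm0]

lemma mulVec_single_ne_zero {n : ℕ} {U : Matrix (Fin n) (Fin n) ℝ}
    (hU : Uᵀ * U = 1) (j : Fin n) : U *ᵥ Pi.single j 1 ≠ 0 := by
  intro h
  have h2 : Uᵀ *ᵥ (U *ᵥ Pi.single j 1) = Uᵀ *ᵥ 0 := by rw [h]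
  rw [Matrix.mulVec_mulVec, hU, Matrix.one_mulVec, Matrix.mulVec_zero] at h2
  have := congrFun h2 j
  simp at this

lemma conj_mulVec {n : ℕ} {U : Matrix (Fin n) (Fin n) ℝ}
    (hU : Uᵀ * U = 1) (d : Fin n → ℝ) (j : Fin n) :
    (U * Matrix.diagonal d * Uᵀ) *ᵥ (U *ᵥ Pi.single j 1) =
      d j • (U *ᵥ Pi.single j 1) := by
  rw [Matrix.mulVec_mulVec, Matrix.mul_assoc, Matrix.mul_assoc, hU, Matrix.mul_one,
    ← Matrix.mulVec_mulVec, Matrix.diagonal_mulVec_single]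
  have h : Pi.single j (d j * 1) = d j • (Pi.single j 1 : Fin n → ℝ) := by
    ext i
    by_cases h : i = j
    · subst h; simp
    · simp [h]
  rw [h]
  simp [Matrix.mulVec_smul]

lemma isGreatest_conj_opNorm {n : ℕ} {U : Matrix (Fin n) (Fin n) ℝ}
    (hU : U * Uᵀ = 1) (d : Fin n → ℝ) (m : ℝ) (hd0 : ∀ i, 0 ≤ d i)
    (hm : IsGreatest (Set.range d) m) :
    IsGreatest {r : ℝ | ∃ y : Fin n → ℝ, y ≠ 0 ∧
      r = norm2 ((U * Matrix.diagonal d * Uᵀ) *ᵥ y) / norm2 y} m := by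
  have hU' : Uᵀ * U = 1 := mul_eq_one_comm.mp hU
  have hUT' : Uᵀᵀ * Uᵀ = 1 := by rw [Matrix.transpose_transpose]; exact hU
  constructor
  · obtain ⟨j, hj⟩ := hm.1
    have hy0 : U *ᵥ Pi.single j 1 ≠ 0 := mulVec_single_ne_zero hU' j
    refine ⟨U *ᵥ Pi.single j 1, hy0, ?_⟩
    rw [conj_mulVec hU' d j, norm2_smul, abs_of_nonneg (hd0 j), hj,
      mul_div_assoc, div_self (ne_of_gt (norm2_pos hy0)), mul_one]
  · rintro r ⟨y, hy, rfl⟩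
    have hny : 0 < norm2 y := norm2_pos hy
    rw [div_le_iff₀ hny]
    have hm0 : 0 ≤ m := by
      obtain ⟨j, hj⟩ := hm.1
      exact le_trans (hd0 j) (hj ▸ hm.2 ⟨j, rfl⟩)
    calc norm2 ((U * Matrix.diagonal d * Uᵀ) *ᵥ y)
        = norm2 (Matrix.diagonal d *ᵥ (Uᵀ *ᵥ y)) := by
          rw [← Matrix.mulVec_mulVec, ← Matrix.mulVec_mulVec, norm2_mulVec_orth hU']
      _ ≤ m * norm2 (Uᵀ *ᵥ y) := norm2_diag_le hm0
          (fun i => by rw [abs_of_nonneg (hd0 i)]; exact hm.2 ⟨i, rfl⟩) _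
      _ = m * norm2 y := by rw [norm2_mulVec_orth hUT']

lemma one_sub_conj {n : ℕ} {U : Matrix (Fin n) (Fin n) ℝ}
    (hU : U * Uᵀ = 1) (b : Fin n → ℝ) :
    (1 : Matrix (Fin n) (Fin n) ℝ) - U * Matrix.diagonal b * Uᵀ =
      U * Matrix.diagonal (fun i => 1 - b i) * Uᵀ := by
  have h : Matrix.diagonal (fun i => 1 - b i) =
      (1 : Matrix (Fin n) (Fin n) ℝ) - Matrix.diagonal b := by
    rw [← Matrix.diagonal_one, ← Matrix.diagonal_sub]
  rw [h, Matrix.mul_sub, Matrix.sub_mul, Matrix.mul_one, hU]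

end KrrKgfAux

open KrrKgfAux in
/-- Worst-case relative fitted values: the operator norm of the KRR fitting operator
`I − (I + tK)⁻¹` is `1 − 1/(1 + t s_max)`, which is at most `1 − e^{−t s_max}`, the
operator norm of the KGF fitting operator `I − exp(−tK)`. -/
theorem krr_closer_to_zero_than_kgf (n : ℕ) (hn : 0 < n) (K : Matrix (Fin n) (Fin n) ℝ)
    (hK : K.PosDef) (t : ℝ) (ht : 0 ≤ t)
    (U : Matrix (Fin n) (Fin n) ℝ) (s : Fin n → ℝ)
    (hU : U * Uᵀ = 1) (hKdecomp : K = U * Matrix.diagonal s * Uᵀ)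
    (smax : ℝ) (hsmax : IsGreatest (Set.range s) smax) :
    IsGreatest {r : ℝ | ∃ y : Fin n → ℝ, y ≠ 0 ∧
        r = norm2 ((((1 : Matrix (Fin n) (Fin n) ℝ) -
              ((1 : Matrix (Fin n) (Fin n) ℝ) + t • K)⁻¹)) *ᵥ y) / norm2 y}
      (1 - 1 / (1 + t * smax)) ∧
    IsGreatest {r : ℝ | ∃ y : Fin n → ℝ, y ≠ 0 ∧
        r = norm2 ((((1 : Matrix (Fin n) (Fin n) ℝ) -
              NormedSpace.exp (-(t • K)))) *ᵥ y) / norm2 y}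
      (1 - Real.exp (-(t * smax))) ∧
    1 - 1 / (1 + t * smax) ≤ 1 - Real.exp (-(t * smax)) := by
  have hU' : Uᵀ * U = 1 := mul_eq_one_comm.mp hU
  -- eigenvalues are positive
  have hs : ∀ i, 0 < s i := by
    intro i
    have hx0 : U *ᵥ Pi.single i 1 ≠ 0 := mulVec_single_ne_zero hU' i
    have hpos := hK.dotProduct_mulVec_pos hx0
    rw [star_trivial, hKdecomp, conj_mulVec hU' s i, dotProduct_smul] at hpos
    have hd : 0 ≤ (U *ᵥ Pi.single i 1) ⬝ᵥ (U *ᵥ Pi.single i 1) := by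
      rw [dot_self_eq_sum_sq]
      exact Finset.sum_nonneg fun j _ => sq_nonneg _
    simp only [smul_eq_mul] at hpos
    nlinarith
  have hsmaxpos : 0 < smax := by
    obtain ⟨j, hj⟩ := hsmax.1
    exact hj ▸ hs j
  -- the `a` function
  set a : Fin n → ℝ := fun i => 1 + t * s i with ha
  have hapos : ∀ i, 0 < a i := fun i => by
    have := mul_nonneg ht (hs i).le
    simp only [ha]; linarith
  -- I + tK = U diag(a) Uᵀ
  have h1 : (1 : Matrix (Fin n) (Fin n) ℝ) + t • K = U * Matrix.diagonal a * Uᵀ := by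
    have hda : Matrix.diagonal a =
        (1 : Matrix (Fin n) (Fin n) ℝ) + t • Matrix.diagonal s := by
      rw [← Matrix.diagonal_one, ← Matrix.diagonal_smul, ← Matrix.diagonal_add]
      rfl
    rw [hda, Matrix.mul_add, Matrix.add_mul, Matrix.mul_one, hU, hKdecomp,
      Matrix.mul_smul, Matrix.smul_mul]
  -- inverse
  have hinv : ((1 : Matrix (Fin n) (Fin n) ℝ) + t • K)⁻¹ =
      U * Matrix.diagonal (fun i => (a i)⁻¹) * Uᵀ := by
    apply Matrix.inv_eq_right_inv
    rw [h1]
    calc U * Matrix.diagonal a * Uᵀ * (U * Matrix.diagonal (fun i => (a i)⁻¹) * Uᵀ)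
        = U * (Matrix.diagonal a * (Uᵀ * U) * Matrix.diagonal (fun i => (a i)⁻¹)) * Uᵀ := by
          simp only [Matrix.mul_assoc]
      _ = U * (Matrix.diagonal a * Matrix.diagonal (fun i => (a i)⁻¹)) * Uᵀ := by
          rw [hU', Matrix.mul_one]
      _ = 1 := by
          rw [Matrix.diagonal_mul_diagonal]
          have : (fun i => a i * (a i)⁻¹) = fun _ : Fin n => (1 : ℝ) := by
            funext i; exact mul_inv_cancel₀ (ne_of_gt (hapos i))
          rw [this, Matrix.diagonal_one, Matrix.mul_one, hU]
  -- KRR operator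
  have hKRR : (1 : Matrix (Fin n) (Fin n) ℝ) - ((1 : Matrix (Fin n) (Fin n) ℝ) + t • K)⁻¹ =
      U * Matrix.diagonal (fun i => 1 - (a i)⁻¹) * Uᵀ := by
    rw [hinv, one_sub_conj hU]
  -- exponential
  have hUunit : IsUnit U := ⟨⟨U, Uᵀ, hU, hU'⟩, rfl⟩
  have hUinv : U⁻¹ = Uᵀ := Matrix.inv_eq_right_inv hU
  have hexp : NormedSpace.exp (-(t • K)) =
      U * Matrix.diagonal (fun i => Real.exp (-(t * s i))) * Uᵀ := by
    have hneg : -(t • K) = U * Matrix.diagonal (fun i => -(t * s i)) * Uᵀ := by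
      have : Matrix.diagonal (fun i => -(t * s i)) = -(t • Matrix.diagonal s) := by
        rw [← Matrix.diagonal_smul, ← Matrix.diagonal_neg]
        rfl
      rw [this, hKdecomp, Matrix.mul_neg, Matrix.neg_mul, Matrix.mul_smul, Matrix.smul_mul]
    rw [hneg, ← hUinv, Matrix.exp_conj U _ hUunit, Matrix.exp_diagonal, hUinv]
    congr 1
    congr 1
    rw [Pi.exp_def]
    funext i
    rw [← Real.exp_eq_exp_ℝ]
  have hKGF : (1 : Matrix (Fin n) (Fin n) ℝ) - NormedSpace.exp (-(t • K)) =
      U * Matrix.diagonal (fun i => 1 - Real.exp (-(t * s i))) * Uᵀ := by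
    rw [hexp, one_sub_conj hU]
  obtain ⟨j0, hj0⟩ := hsmax.1
  -- greatest for KRR eigenvalues
  have hg1 : IsGreatest (Set.range fun i => 1 - (a i)⁻¹) (1 - 1 / (1 + t * smax)) := by
    constructor
    · exact ⟨j0, by rw [one_div, ha]; simp only [hj0]⟩
    · rintro r ⟨i, rfl⟩
      rw [one_div]
      have h1p : (0:ℝ) < 1 + t * smax := by nlinarith
      have : (1 + t * smax)⁻¹ ≤ (a i)⁻¹ := by
        apply inv_anti₀ (hapos i)
        have : s i ≤ smax := hsmax.2 ⟨i, rfl⟩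
        simp only [ha]
        nlinarith
      linarith
  have hd01 : ∀ i, 0 ≤ 1 - (a i)⁻¹ := by
    intro i
    have : (a i)⁻¹ ≤ 1 := by
      have h1 := mul_nonneg ht (hs i).le
      have h2 : (1:ℝ) ≤ a i := by simp only [ha]; linarith
      exact inv_le_one_of_one_le₀ h2
    linarith
  -- greatest for KGF eigenvalues
  have hg2 : IsGreatest (Set.range fun i => 1 - Real.exp (-(t * s i)))
      (1 - Real.exp (-(t * smax))) := by
    constructor
    · exact ⟨j0, by show 1 - Real.exp (-(t * s j0)) = _; rw [hj0]⟩
    · rintro r ⟨i, rfl⟩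
      show 1 - Real.exp (-(t * s i)) ≤ _
      have : Real.exp (-(t * smax)) ≤ Real.exp (-(t * s i)) := by
        apply Real.exp_le_exp.mpr
        have : s i ≤ smax := hsmax.2 ⟨i, rfl⟩
        nlinarith
      linarith
  have hd02 : ∀ i, 0 ≤ 1 - Real.exp (-(t * s i)) := by
    intro i
    have : Real.exp (-(t * s i)) ≤ 1 := by
      rw [Real.exp_le_one_iff]
      have := mul_nonneg ht (hs i).le
      linarith
    linarith
  refine ⟨?_, ?_, ?_⟩
  · rw [hKRR]
    exact isGreatest_conj_opNorm hU _ _ hd01 hg1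
  · rw [hKGF]
    exact isGreatest_conj_opNorm hU _ _ hd02 hg2
  · have hx : (0:ℝ) ≤ t * smax := mul_nonneg ht hsmaxpos.le
    have h1p : (0:ℝ) < 1 + t * smax := by linarith
    have : Real.exp (-(t * smax)) ≤ 1 / (1 + t * smax) := by
      rw [Real.exp_neg, one_div]
      apply inv_anti₀ h1p
      have := Real.add_one_le_exp (t * smax)
      linarith
    linarith
end

section
/- Let K = U S Uᵀ be symmetric positive definite with eigenvalues s_i > 0, y = Kα₀ + ε, E[ε]=0, Cov(ε)=σ²I. Then for every α₀ ∈ ℝ^n and t > 0, the estimation risk of kernel gradient flow satisfies Risk(α_KGF(t); α₀) = Σᵢ ((U_{:,i}ᵀα₀)² e^{−2ts_i} + σ²(1−e^{−ts_i})²/s_i²) ≤ 1.6862 · Σᵢ ((U_{:,i}ᵀα₀)²/(ts_i+1)² + σ² t²/(ts_i+1)²) = 1.6862 · Risk(α_KRR(1/t); α₀). -/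
/-!
Since `U` is orthogonal, `K`, `exp (-tK)`, `K⁻¹` and `(K + t⁻¹)⁻¹` are all of the form
`U diag(g) Uᵀ`, and the estimator `U diag(g) Uᵀ y` has bias `U diag(g s - 1) Uᵀ α₀` and noise
covariance `σ² U diag(g²) Uᵀ`; this gives both risks as eigen-sums. The comparison is then made
eigenvalue by eigenvalue with `x = t sᵢ`: the bias terms compare through `e^{-x} ≤ 1/(1 + x)` and
the variance terms through `(1 - e^{-x})(1 + x) ≤ 1.2985 x`, with `1.2985² ≤ 1.6862`.
-/

open Matrix MeasureTheory

section ExpInequality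

open Real Set

theorem antitoneOn_mul_exp_neg : AntitoneOn (fun x : ℝ => x * exp (-x)) (Ici 1) := by
  intro x hx y _ hxy
  have hshift : exp (-x) = exp (y - x) * exp (-y) := by rw [← exp_add]; ring_nf
  have hy : y ≤ x * exp (y - x) := by
    nlinarith [add_one_le_exp (y - x), mem_Ici.1 hx]
  simp only [hshift]
  nlinarith [exp_pos (-y)]

theorem hasDerivAt_one_add_mul_exp_neg_add_mul (c x : ℝ) :
    HasDerivAt (fun x => (1 + x) * exp (-x) + c * x) (c - x * exp (-x)) x := by
  have := (((hasDerivAt_id' x).const_add 1).fun_mul (hasDerivAt_neg x).exp).fun_add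
    ((hasDerivAt_id' x).const_mul c)
  exact this.congr_deriv (by ring)

theorem one_le_one_add_mul_exp_neg_add_of_le_one {x : ℝ} (hx₀ : 0 ≤ x) (hx₁ : x ≤ 1) :
    1 ≤ (1 + x) * exp (-x) + 0.2985 * x := by
  have h := exp_bound' hx₀ hx₁ (n := 4) (by norm_num)
  norm_num [Finset.sum_range_succ, Nat.factorial] at h
  rw [exp_neg, ← div_eq_mul_inv, ← sub_le_iff_le_add, le_div_iff₀ (exp_pos x)]
  nlinarith [mul_nonneg hx₀ hx₀, mul_nonneg (mul_nonneg hx₀ hx₀) hx₀,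
    mul_nonneg (mul_nonneg hx₀ hx₀) (mul_nonneg hx₀ hx₀), mul_nonneg hx₀ (sub_nonneg.2 hx₁)]

theorem exists_mem_Icc_mul_exp_neg_eq :
    ∃ x₂ ∈ Icc (1.7925 : ℝ) 5, x₂ * exp (-x₂) = 0.2985 := by
  have hexp_lt : exp 1.7925 < 1.7925 / 0.2985 := by
    have h := exp_bound' (x := 0.7925) (by norm_num) (by norm_num) (n := 8) (by norm_num)
    norm_num [Finset.sum_range_succ, Nat.factorial] at h
    rw [show (1.7925 : ℝ) = 1 + 0.7925 by norm_num, exp_add]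
    nlinarith [exp_one_lt_d9, exp_pos 0.7925]
  have hlo : 0.2985 ≤ (1.7925 : ℝ) * exp (-1.7925) := by
    rw [exp_neg, ← div_eq_mul_inv, le_div_iff₀ (exp_pos _)]
    linarith
  have hhi : (5 : ℝ) * exp (-5) ≤ 0.2985 := by
    rw [exp_neg, ← div_eq_mul_inv, div_le_iff₀ (exp_pos _)]
    nlinarith [quadratic_le_exp_of_nonneg (x := 5) (by norm_num)]
  exact intermediate_value_Icc' (by norm_num) (by fun_prop) ⟨hhi, hlo⟩

/- With `c = 0.2985`, on `[1, ∞)` the function `φ x = (1 + x) e^{-x} + c x` has derivative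
`c - x e^{-x}`, which changes sign exactly once, at the root `x₂` of `x e^{-x} = c`. There
`e^{-x₂} = c / x₂`, so `φ x₂ ≥ 1` reduces to `c (x₂² + x₂ + 1) ≥ x₂`, which holds as soon as
`x₂ ≥ 1.7925`. -/
theorem one_le_one_add_mul_exp_neg_add_of_one_le {x : ℝ} (hx : 1 ≤ x) :
    1 ≤ (1 + x) * exp (-x) + 0.2985 * x := by
  set φ : ℝ → ℝ := fun x => (1 + x) * exp (-x) + 0.2985 * x
  have hφ' := hasDerivAt_one_add_mul_exp_neg_add_mul 0.2985
  have hφc : Continuous φ := by fun_prop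
  obtain ⟨x₂, ⟨hx₂lo, -⟩, hx₂⟩ := exists_mem_Icc_mul_exp_neg_eq
  have hmin : φ x₂ ≤ φ x := by
    rcases le_total x x₂ with hle | hle
    · refine antitoneOn_of_hasDerivWithinAt_nonpos (convex_Icc 1 x₂) hφc.continuousOn
        (fun y _ => (hφ' y).hasDerivWithinAt) (fun y hy => ?_) ⟨hx, hle⟩ ⟨by linarith, le_rfl⟩
        hle
      rw [interior_Icc] at hy
      have := antitoneOn_mul_exp_neg (mem_Ici.2 hy.1.le) (mem_Ici.2 (by linarith)) hy.2.le
      simp only at this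
      linarith
    · refine monotoneOn_of_hasDerivWithinAt_nonneg (convex_Ici x₂) hφc.continuousOn
        (fun y _ => (hφ' y).hasDerivWithinAt) (fun y hy => ?_) self_mem_Ici hle hle
      rw [interior_Ici] at hy
      have := antitoneOn_mul_exp_neg (mem_Ici.2 (by linarith)) (mem_Ici.2 (by linarith [hy.out]))
        hy.out.le
      simp only at this
      linarith
  have hval : 1 ≤ φ x₂ := by
    have hx₂pos : 0 < x₂ := by linarith
    have hexp : exp (-x₂) = 0.2985 / x₂ := by rw [eq_div_iff hx₂pos.ne']; linarith
    have hpoly : (1 + x₂) * (0.2985 / x₂) + 0.2985 * x₂ - 1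
        = (0.2985 * x₂ ^ 2 - 0.7015 * x₂ + 0.2985) / x₂ := by
      field_simp; ring
    simp only [φ, hexp]
    rw [← sub_nonneg, hpoly]
    apply div_nonneg _ hx₂pos.le
    nlinarith [mul_nonneg (sub_nonneg.2 hx₂lo) (sub_nonneg.2 hx₂lo)]
  exact hval.trans hmin

theorem one_sub_exp_neg_mul_add_one_le {x : ℝ} (hx : 0 ≤ x) :
    (1 - exp (-x)) * (x + 1) ≤ 1.2985 * x := by
  rcases le_total x 1 with hx₁ | hx₁
  · linarith [one_le_one_add_mul_exp_neg_add_of_le_one hx hx₁]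
  · linarith [one_le_one_add_mul_exp_neg_add_of_one_le hx₁]

theorem kgf_term_le_krr_term {v σ t s : ℝ} (ht : 0 ≤ t) (hs : 0 < s) :
    v ^ 2 * exp (-(2 * t * s)) + σ ^ 2 * (1 - exp (-(t * s))) ^ 2 / s ^ 2 ≤
      1.6862 * (v ^ 2 / (t * s + 1) ^ 2 + σ ^ 2 * t ^ 2 / (t * s + 1) ^ 2) := by
  have hx : 0 ≤ t * s := mul_nonneg ht hs.le
  have hexp_le : exp (-(t * s)) ≤ 1 := exp_le_one_iff.2 (neg_nonpos.2 hx)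
  have hbias : exp (-(t * s)) * (t * s + 1) ≤ 1 := by
    rw [exp_neg, inv_mul_le_iff₀ (exp_pos _), mul_one]
    exact add_one_le_exp _
  have hvar : (1 - exp (-(t * s))) * (t * s + 1) / s ≤ 1.2985 * t := by
    rw [div_le_iff₀ hs, mul_assoc]
    exact one_sub_exp_neg_mul_add_one_le hx
  have hexp_two : exp (-(2 * t * s)) = exp (-(t * s)) ^ 2 := by
    rw [← exp_nat_mul]; ring_nf
  calc v ^ 2 * exp (-(2 * t * s)) + σ ^ 2 * (1 - exp (-(t * s))) ^ 2 / s ^ 2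
      = (v ^ 2 * (exp (-(t * s)) * (t * s + 1)) ^ 2
          + σ ^ 2 * ((1 - exp (-(t * s))) * (t * s + 1) / s) ^ 2) / (t * s + 1) ^ 2 := by
        rw [hexp_two]; field_simp
    _ ≤ (v ^ 2 * 1 ^ 2 + σ ^ 2 * (1.2985 * t) ^ 2) / (t * s + 1) ^ 2 := by
        gcongr
    _ ≤ 1.6862 * (v ^ 2 / (t * s + 1) ^ 2 + σ ^ 2 * t ^ 2 / (t * s + 1) ^ 2) := by
        rw [← add_div, mul_div_assoc']
        gcongr
        nlinarith [sq_nonneg v, sq_nonneg (σ * t)]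

end ExpInequality

section OrthoDiag

variable {ι : Type*} [Fintype ι] [DecidableEq ι]

theorem Matrix.sum_sq_mulVec_of_mem_orthogonalGroup {U : Matrix ι ι ℝ}
    (hU : U ∈ orthogonalGroup ι ℝ) (w : ι → ℝ) : ∑ i, (U *ᵥ w) i ^ 2 = ∑ i, w i ^ 2 := by
  have hdot : ∀ v : ι → ℝ, ∑ i, v i ^ 2 = v ⬝ᵥ v := fun v => by simp [dotProduct, sq]
  rw [hdot, hdot, dotProduct_mulVec, ← mulVec_transpose, mulVec_mulVec,
    (mem_orthogonalGroup_iff' ι ℝ).1 hU, one_mulVec]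

/-- `d ↦ U diag(d) Uᵀ`, bundled as an algebra map so that sums, products and scalars pass
through it. -/
noncomputable def orthoDiag (U : orthogonalGroup ι ℝ) : (ι → ℝ) →ₐ[ℝ] Matrix ι ι ℝ :=
  (Unitary.conjStarAlgAut ℝ (Matrix ι ι ℝ) U : Matrix ι ι ℝ →ₐ[ℝ] Matrix ι ι ℝ).comp
    (diagonalAlgHom ℝ)

variable (U : orthogonalGroup ι ℝ)

theorem orthoDiag_apply (d : ι → ℝ) : orthoDiag U d = U * diagonal d * (U : Matrix ι ι ℝ)ᵀ := by
  simp [orthoDiag, star_eq_conjTranspose]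

theorem inv_orthoDiag {d : ι → ℝ} (hd : ∀ i, d i ≠ 0) : (orthoDiag U d)⁻¹ = orthoDiag U d⁻¹ := by
  refine inv_eq_right_inv ?_
  rw [← map_mul, ← map_one (orthoDiag U)]
  congr 1
  ext i
  exact mul_inv_cancel₀ (hd i)

theorem exp_orthoDiag (d : ι → ℝ) :
    NormedSpace.exp (orthoDiag U d) = orthoDiag U (fun i => Real.exp (d i)) := by
  have hinv : (U : Matrix ι ι ℝ)⁻¹ = (U : Matrix ι ι ℝ)ᵀ :=
    inv_eq_right_inv ((mem_orthogonalGroup_iff ι ℝ).1 U.2)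
  have hunit : IsUnit (U : Matrix ι ι ℝ) :=
    (isUnit_iff_isUnit_det _).2 (UnitaryGroup.det_isUnit U)
  rw [orthoDiag_apply, orthoDiag_apply, ← hinv, Matrix.exp_conj _ _ hunit, exp_diagonal,
    Pi.exp_def, Real.exp_eq_exp_ℝ]

theorem transpose_orthoDiag (d : ι → ℝ) : (orthoDiag U d)ᵀ = orthoDiag U d := by
  rw [orthoDiag_apply, transpose_mul, transpose_mul, transpose_transpose, diagonal_transpose,
    Matrix.mul_assoc]

theorem trace_orthoDiag (d : ι → ℝ) : (orthoDiag U d).trace = ∑ i, d i := by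
  rw [orthoDiag_apply, trace_mul_cycle, (mem_orthogonalGroup_iff' ι ℝ).1 U.2, Matrix.one_mul,
    trace_diagonal]

theorem sum_sq_orthoDiag_mulVec (d v : ι → ℝ) :
    ∑ i, (orthoDiag U d *ᵥ v) i ^ 2 = ∑ i, (d i * ((U : Matrix ι ι ℝ)ᵀ *ᵥ v) i) ^ 2 := by
  rw [orthoDiag_apply, ← mulVec_mulVec, ← mulVec_mulVec,
    sum_sq_mulVec_of_mem_orthogonalGroup U.2]
  simp [mulVec_diagonal]

end OrthoDiag

theorem Matrix.mulVec_apply_sq {ι κ : Type*} [Fintype κ] (A : Matrix ι κ ℝ) (v : κ → ℝ) (i : ι) :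
    (A *ᵥ v) i ^ 2 = ∑ j, ∑ k, A i j * A i k * (v j * v k) := by
  simp only [mulVec, dotProduct, sq, Finset.sum_mul_sum]
  exact Finset.sum_congr rfl fun j _ => Finset.sum_congr rfl fun k _ => by ring

section WhiteNoise

variable {Ω ι κ : Type*} [MeasurableSpace Ω] [Fintype κ] [DecidableEq κ]

structure IsWhiteNoise (μ : Measure Ω) (ε : Ω → κ → ℝ) (σ : ℝ) : Prop where
  integrable : ∀ i, Integrable (fun ω => ε ω i) μ
  integrable_mul : ∀ i j, Integrable (fun ω => ε ω i * ε ω j) μ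
  integral_eq_zero : ∀ i, ∫ ω, ε ω i ∂μ = 0
  integral_mul : ∀ i j, ∫ ω, ε ω i * ε ω j ∂μ = σ ^ 2 * if i = j then 1 else 0

namespace IsWhiteNoise

variable {μ : Measure Ω} {ε : Ω → κ → ℝ} {σ : ℝ}

theorem integrable_mulVec_apply (h : IsWhiteNoise μ ε σ) (A : Matrix ι κ ℝ) (i : ι) :
    Integrable (fun ω => (A *ᵥ ε ω) i) μ := by
  simp only [mulVec, dotProduct]
  exact integrable_finsetSum _ fun j _ => (h.integrable j).const_mul _

theorem integral_mulVec_apply (h : IsWhiteNoise μ ε σ) (A : Matrix ι κ ℝ) (i : ι) :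
    ∫ ω, (A *ᵥ ε ω) i ∂μ = 0 := by
  simp only [mulVec, dotProduct]
  rw [integral_finsetSum _ fun j _ => (h.integrable j).const_mul _]
  simp [integral_const_mul, h.integral_eq_zero]

theorem integrable_mulVec_apply_sq (h : IsWhiteNoise μ ε σ) (A : Matrix ι κ ℝ) (i : ι) :
    Integrable (fun ω => (A *ᵥ ε ω) i ^ 2) μ := by
  simp only [mulVec_apply_sq]
  exact integrable_finsetSum _ fun j _ => integrable_finsetSum _ fun k _ =>
    (h.integrable_mul j k).const_mul _

theorem integral_mulVec_apply_sq (h : IsWhiteNoise μ ε σ) (A : Matrix ι κ ℝ) (i : ι) :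
    ∫ ω, (A *ᵥ ε ω) i ^ 2 ∂μ = σ ^ 2 * (A * Aᵀ) i i := by
  simp only [mulVec_apply_sq]
  rw [integral_finsetSum _ fun j _ => integrable_finsetSum _ fun k _ =>
    (h.integrable_mul j k).const_mul _]
  simp_rw [integral_finsetSum _ fun k _ => (h.integrable_mul _ k).const_mul _,
    integral_const_mul, h.integral_mul]
  simp [mul_apply, Finset.mul_sum, mul_comm]

theorem integral_sum_sq_add_mulVec [Fintype ι] [IsProbabilityMeasure μ] (h : IsWhiteNoise μ ε σ)
    (A : Matrix ι κ ℝ) (b : ι → ℝ) :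
    ∫ ω, ∑ i, (b i + (A *ᵥ ε ω) i) ^ 2 ∂μ = ∑ i, b i ^ 2 + σ ^ 2 * (A * Aᵀ).trace := by
  have hexpand : ∀ i ω, (b i + (A *ᵥ ε ω) i) ^ 2
      = b i ^ 2 + 2 * b i * (A *ᵥ ε ω) i + (A *ᵥ ε ω) i ^ 2 := fun i ω => by ring
  have hlin : ∀ i, Integrable (fun ω => b i ^ 2 + 2 * b i * (A *ᵥ ε ω) i) μ := fun i =>
    (integrable_const _).add ((h.integrable_mulVec_apply A i).const_mul _)
  have hint : ∀ i, Integrable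
      (fun ω => b i ^ 2 + 2 * b i * (A *ᵥ ε ω) i + (A *ᵥ ε ω) i ^ 2) μ := fun i =>
    (hlin i).add (h.integrable_mulVec_apply_sq A i)
  simp only [hexpand]
  rw [integral_finsetSum _ fun i _ => hint i]
  simp only [trace, diag, Finset.mul_sum, ← Finset.sum_add_distrib]
  refine Finset.sum_congr rfl fun i _ => ?_
  rw [integral_add (hlin i) (h.integrable_mulVec_apply_sq A i), integral_add (integrable_const _)
    ((h.integrable_mulVec_apply A i).const_mul _), integral_const_mul,
    h.integral_mulVec_apply, h.integral_mulVec_apply_sq]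
  simp

theorem integral_sum_sq_mulVec_sub [IsProbabilityMeasure μ] (h : IsWhiteNoise μ ε σ)
    (M K : Matrix κ κ ℝ) (α₀ : κ → ℝ) :
    ∫ ω, ∑ i, ((M *ᵥ (K *ᵥ α₀ + ε ω)) i - α₀ i) ^ 2 ∂μ
      = ∑ i, ((M * K - 1) *ᵥ α₀) i ^ 2 + σ ^ 2 * (M * Mᵀ).trace := by
  have hdecomp : ∀ ω i, (M *ᵥ (K *ᵥ α₀ + ε ω)) i - α₀ i
      = ((M * K - 1) *ᵥ α₀) i + (M *ᵥ ε ω) i := by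
    intro ω i
    simp only [mulVec_add, mulVec_mulVec, sub_mulVec, one_mulVec, Pi.add_apply, Pi.sub_apply]
    ring
  simp only [hdecomp]
  exact h.integral_sum_sq_add_mulVec M _

theorem integral_sum_sq_orthoDiag_mulVec_sub [IsProbabilityMeasure μ] (h : IsWhiteNoise μ ε σ)
    (U : orthogonalGroup κ ℝ) (g s α₀ : κ → ℝ) :
    ∫ ω, ∑ i, ((orthoDiag U g *ᵥ (orthoDiag U s *ᵥ α₀ + ε ω)) i - α₀ i) ^ 2 ∂μ
      = ∑ i, (((g i * s i - 1) * ((U : Matrix κ κ ℝ)ᵀ *ᵥ α₀) i) ^ 2 + σ ^ 2 * g i ^ 2) := by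
  rw [h.integral_sum_sq_mulVec_sub, ← map_mul, ← map_one (orthoDiag U), ← map_sub,
    sum_sq_orthoDiag_mulVec, transpose_orthoDiag, ← map_mul, trace_orthoDiag, Finset.mul_sum,
    ← Finset.sum_add_distrib]
  simp [sq, mul_comm]

theorem kgf_risk_eq [IsProbabilityMeasure μ] (h : IsWhiteNoise μ ε σ) (U : orthogonalGroup κ ℝ)
    {s : κ → ℝ} (hs : ∀ i, s i ≠ 0) (t : ℝ) (α₀ : κ → ℝ) :
    ∫ ω, ∑ i, ((((1 - NormedSpace.exp (-(t • orthoDiag U s))) * (orthoDiag U s)⁻¹) *ᵥ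
        (orthoDiag U s *ᵥ α₀ + ε ω)) i - α₀ i) ^ 2 ∂μ
      = ∑ i, (((U : Matrix κ κ ℝ)ᵀ *ᵥ α₀) i ^ 2 * Real.exp (-(2 * t * s i)) +
        σ ^ 2 * (1 - Real.exp (-(t * s i))) ^ 2 / s i ^ 2) := by
  have hM : (1 - NormedSpace.exp (-(t • orthoDiag U s))) * (orthoDiag U s)⁻¹
      = orthoDiag U (fun i => (1 - Real.exp (-(t * s i))) * (s i)⁻¹) := by
    rw [← map_smul, ← map_neg, exp_orthoDiag, inv_orthoDiag U hs, ← map_one (orthoDiag U),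
      ← map_sub, ← map_mul]
    rfl
  rw [hM, h.integral_sum_sq_orthoDiag_mulVec_sub]
  refine Finset.sum_congr rfl fun i _ => ?_
  have hsi := hs i
  rw [show -(2 * t * s i) = (2 : ℕ) * -(t * s i) by push_cast; ring, Real.exp_nat_mul]
  field_simp
  ring

theorem krr_risk_eq [IsProbabilityMeasure μ] (h : IsWhiteNoise μ ε σ) (U : orthogonalGroup κ ℝ)
    {s : κ → ℝ} (hs : ∀ i, 0 < s i) {t : ℝ} (ht : 0 < t) (α₀ : κ → ℝ) :
    ∫ ω, ∑ i, (((orthoDiag U s + (1 / t) • 1)⁻¹ *ᵥ (orthoDiag U s *ᵥ α₀ + ε ω)) i - α₀ i) ^ 2 ∂μ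
      = ∑ i, (((U : Matrix κ κ ℝ)ᵀ *ᵥ α₀) i ^ 2 / (t * s i + 1) ^ 2 +
        σ ^ 2 * t ^ 2 / (t * s i + 1) ^ 2) := by
  have hden : ∀ i, t * s i + 1 ≠ 0 := fun i => (add_pos (mul_pos ht (hs i)) one_pos).ne'
  have hM : (orthoDiag U s + (1 / t) • 1)⁻¹ = orthoDiag U (fun i => t / (t * s i + 1)) := by
    rw [← map_one (orthoDiag U), ← map_smul, ← map_add,
      inv_orthoDiag U fun i => by simpa using (add_pos (hs i) (inv_pos.2 ht)).ne']
    congr 1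
    ext i
    simp only [Pi.inv_apply, Pi.add_apply, Pi.smul_apply, Pi.one_apply, smul_eq_mul, mul_one]
    field_simp [hden i]
  rw [hM, h.integral_sum_sq_orthoDiag_mulVec_sub]
  refine Finset.sum_congr rfl fun i _ => ?_
  have := hden i
  field_simp
  ring

end IsWhiteNoise

end WhiteNoise

theorem kgf_krr_estimation_risk_general
    (Ω : Type*) [MeasureSpace Ω] [IsProbabilityMeasure (volume : Measure Ω)]
    (n : ℕ) (K : Matrix (Fin n) (Fin n) ℝ)
    (U : Matrix (Fin n) (Fin n) ℝ) (s : Fin n → ℝ)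
    (hU : U * Uᵀ = 1) (hKdecomp : K = U * Matrix.diagonal s * Uᵀ)
    (hs : ∀ i, 0 < s i)
    (t : ℝ) (ht : 0 < t) (α₀ : Fin n → ℝ) (σ : ℝ)
    (ε : Ω → Fin n → ℝ)
    (hmeas : ∀ i, Integrable (fun ω => ε ω i))
    (hmeas2 : ∀ i j, Integrable (fun ω => ε ω i * ε ω j))
    (hmean : ∀ i, ∫ ω, ε ω i = 0)
    (hcov : ∀ i j, ∫ ω, ε ω i * ε ω j = σ ^ 2 * (if i = j then 1 else 0)) :
    let y : Ω → Fin n → ℝ := fun ω => K *ᵥ α₀ + ε ω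
    let αKGF : Ω → Fin n → ℝ := fun ω =>
      (((1 : Matrix (Fin n) (Fin n) ℝ) - NormedSpace.exp (-(t • K))) * K⁻¹) *ᵥ y ω
    let αKRR : Ω → Fin n → ℝ := fun ω =>
      (K + (1 / t) • (1 : Matrix (Fin n) (Fin n) ℝ))⁻¹ *ᵥ y ω
    let riskKGF : ℝ := ∫ ω, ∑ i, (αKGF ω i - α₀ i) ^ 2
    let riskKRR : ℝ := ∫ ω, ∑ i, (αKRR ω i - α₀ i) ^ 2
    riskKGF = ∑ i, (((Uᵀ *ᵥ α₀) i) ^ 2 * Real.exp (-(2 * t * s i)) +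
        σ ^ 2 * (1 - Real.exp (-(t * s i))) ^ 2 / (s i) ^ 2) ∧
    riskKRR = ∑ i, (((Uᵀ *ᵥ α₀) i) ^ 2 / (t * s i + 1) ^ 2 +
        σ ^ 2 * t ^ 2 / (t * s i + 1) ^ 2) ∧
    riskKGF ≤ 1.6862 * riskKRR := by
  intro y αKGF αKRR riskKGF riskKRR
  lift U to orthogonalGroup (Fin n) ℝ using (mem_orthogonalGroup_iff _ ℝ).2 hU
  rw [← orthoDiag_apply] at hKdecomp
  subst hKdecomp
  have hε : IsWhiteNoise volume ε σ := ⟨hmeas, hmeas2, hmean, hcov⟩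
  have hriskKGF : riskKGF = _ := hε.kgf_risk_eq U (fun i => (hs i).ne') t α₀
  have hriskKRR : riskKRR = _ := hε.krr_risk_eq U hs ht α₀
  refine ⟨hriskKGF, hriskKRR, ?_⟩
  rw [hriskKGF, hriskKRR, Finset.mul_sum]
  exact Finset.sum_le_sum fun i _ => kgf_term_le_krr_term ht.le (hs i)

/-- Estimation risk comparison between KGF and KRR: the KGF risk equals the stated
eigen-sum, the KRR risk equals its eigen-sum, and the former is at most
`1.6862` times the latter. -/
theorem kgf_krr_estimation_risk
    (Ω : Type*) [MeasureSpace Ω] [IsProbabilityMeasure (volume : Measure Ω)]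
    (n : ℕ) (K : Matrix (Fin n) (Fin n) ℝ) (hK : K.PosDef)
    (U : Matrix (Fin n) (Fin n) ℝ) (s : Fin n → ℝ)
    (hU : U * Uᵀ = 1) (hKdecomp : K = U * Matrix.diagonal s * Uᵀ)
    (hs : ∀ i, 0 < s i)
    (t : ℝ) (ht : 0 < t) (α₀ : Fin n → ℝ) (σ : ℝ)
    (ε : Ω → Fin n → ℝ)
    (hmeas : ∀ i, Integrable (fun ω => ε ω i))
    (hmeas2 : ∀ i j, Integrable (fun ω => ε ω i * ε ω j))
    (hmean : ∀ i, ∫ ω, ε ω i = 0)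
    (hcov : ∀ i j, ∫ ω, ε ω i * ε ω j = σ ^ 2 * (if i = j then 1 else 0)) :
    let y : Ω → Fin n → ℝ := fun ω => K *ᵥ α₀ + ε ω
    let αKGF : Ω → Fin n → ℝ := fun ω =>
      (((1 : Matrix (Fin n) (Fin n) ℝ) - NormedSpace.exp (-(t • K))) * K⁻¹) *ᵥ y ω
    let αKRR : Ω → Fin n → ℝ := fun ω =>
      (K + (1 / t) • (1 : Matrix (Fin n) (Fin n) ℝ))⁻¹ *ᵥ y ω
    let riskKGF : ℝ := ∫ ω, ∑ i, (αKGF ω i - α₀ i) ^ 2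
    let riskKRR : ℝ := ∫ ω, ∑ i, (αKRR ω i - α₀ i) ^ 2
    riskKGF = ∑ i, (((Uᵀ *ᵥ α₀) i) ^ 2 * Real.exp (-(2 * t * s i)) +
        σ ^ 2 * (1 - Real.exp (-(t * s i))) ^ 2 / (s i) ^ 2) ∧
    riskKRR = ∑ i, (((Uᵀ *ᵥ α₀) i) ^ 2 / (t * s i + 1) ^ 2 +
        σ ^ 2 * t ^ 2 / (t * s i + 1) ^ 2) ∧
    riskKGF ≤ 1.6862 * riskKRR :=
  kgf_krr_estimation_risk_general Ω n K U s hU hKdecomp hs t ht α₀ σ ε hmeas hmeas2 hmean hcov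
end
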